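/- arXiv:1309.5697 — 14 statements merged into one kernel-verified Lean document; each statement's English description precedes it below -/
import Mathlib

section
/- Let J be a finite set of unit jobs and let m : ℕ → ℕ be a machine-capacity function. There exists a feasible schedule S of J with #_S(t) ≤ m(t) for every time t if and only if for all natural numbers 0 ≤ ℓ < r, Σ_{ℓ≤t<r} m(t) ≥ J(ℓ,r). (Equivalently, a schedule following the earliest-deadline-first principle that executes up to m(t) jobs at each time t is feasible if and only if this capacity condition holds.) -/
open Finset

private lemma key_capacity {ι : Type*} [Fintype ι] [DecidableEq ι]
    (a dl : ι → ℕ) (hjob : ∀ j, a j < dl j) (m : ℕ → ℕ)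
    (hcap : ∀ ℓ r : ℕ, ℓ < r →
        (Finset.univ.filter fun j => ℓ ≤ a j ∧ dl j ≤ r).card ≤
          ∑ t ∈ Finset.Ico ℓ r, m t) :
    ∀ U : Finset ℕ,
      (Finset.univ.filter fun j => Finset.Ico (a j) (dl j) ⊆ U).card ≤ ∑ u ∈ U, m u := by
  classical
  intro U
  induction U using Finset.strongInduction with
  | _ U ih =>
    rcases U.eq_empty_or_nonempty with rfl | hne
    · have : (Finset.univ.filter fun j => Finset.Ico (a j) (dl j) ⊆ (∅ : Finset ℕ)) = ∅ := by
        apply Finset.filter_false_of_mem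
        intro j _ h
        have : a j ∈ Finset.Ico (a j) (dl j) := by simp [hjob j]
        exact absurd (h this) (by simp)
      rw [this]
      simp
    · set ℓ := U.min' hne with hℓ
      have hℓU : ℓ ∈ U := U.min'_mem hne
      have hex : ∃ n, ℓ + 1 + n ∉ U := by
        refine ⟨U.max' hne, fun hmem => ?_⟩
        have := U.le_max' _ hmem
        omega
      set r := ℓ + 1 + Nat.find hex with hr
      have hℓr : ℓ < r := by omega
      have hrU : r ∉ U := Nat.find_spec hex
      have hIco : Finset.Ico ℓ r ⊆ U := by
        intro u hu
        simp only [Finset.mem_Ico] at hu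
        rcases Nat.eq_or_lt_of_le hu.1 with h | h
        · exact h ▸ hℓU
        · have hk : u = ℓ + 1 + (u - ℓ - 1) := by omega
          have : ¬ (ℓ + 1 + (u - ℓ - 1) ∉ U) := by
            have := Nat.find_min hex (m := u - ℓ - 1) (by omega)
            simpa using this
          rw [hk]; exact not_not.mp this
      set U' := U \ Finset.Ico ℓ r with hU'
      have hU'ss : U' ⊂ U := by
        refine Finset.sdiff_ssubset ?_ ?_
        · exact hIco
        · exact ⟨ℓ, by simp [hℓr]⟩
      -- split the filter set
      have hmem_min : ∀ j, Finset.Ico (a j) (dl j) ⊆ U → ℓ ≤ a j := by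
        intro j hsub
        exact U.min'_le _ (hsub (by simp [hjob j]))
      have hsplit : (Finset.univ.filter fun j => Finset.Ico (a j) (dl j) ⊆ U) ⊆
          (Finset.univ.filter fun j => ℓ ≤ a j ∧ dl j ≤ r) ∪
          (Finset.univ.filter fun j => Finset.Ico (a j) (dl j) ⊆ U') := by
        intro j hj
        simp only [Finset.mem_filter, Finset.mem_univ, true_and] at hj
        by_cases har : a j < r
        · have hdl : dl j ≤ r := by
            by_contra h
            exact hrU (hj (by simp [Finset.mem_Ico]; omega))
          simp only [Finset.mem_union, Finset.mem_filter, Finset.mem_univ, true_and]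
          exact Or.inl ⟨hmem_min j hj, hdl⟩
        · simp only [Finset.mem_union, Finset.mem_filter, Finset.mem_univ, true_and]
          refine Or.inr fun u hu => ?_
          simp only [Finset.mem_Ico] at hu
          simp only [hU', Finset.mem_sdiff, Finset.mem_Ico]
          exact ⟨hj (by simp [Finset.mem_Ico]; omega), by omega⟩
      calc (Finset.univ.filter fun j => Finset.Ico (a j) (dl j) ⊆ U).card
          ≤ (Finset.univ.filter fun j => ℓ ≤ a j ∧ dl j ≤ r).card +
            (Finset.univ.filter fun j => Finset.Ico (a j) (dl j) ⊆ U').card :=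
            le_trans (Finset.card_le_card hsplit) (Finset.card_union_le _ _)
        _ ≤ (∑ t ∈ Finset.Ico ℓ r, m t) + ∑ u ∈ U', m u :=
            Nat.add_le_add (hcap ℓ r hℓr) (ih U' hU'ss)
        _ = ∑ u ∈ U, m u := by
            rw [add_comm]
            exact Finset.sum_sdiff hIco

/-- A finite set of unit jobs (indexed by `ι`, with arrival times `a`
and deadlines `dl`, `a j < dl j`) admits a feasible schedule executing at most `m t`
jobs at each time `t` if and only if for all `0 ≤ ℓ < r` the total capacity
`Σ_{ℓ≤t<r} m t` is at least the number `J(ℓ,r)` of jobs arriving at or after `ℓ`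
with deadline at most `r`. -/
theorem unit_jobs_feasible_iff_capacity {ι : Type*} [Fintype ι]
    (a dl : ι → ℕ) (hjob : ∀ j, a j < dl j) (m : ℕ → ℕ) :
    (∃ s : ι → ℕ, (∀ j, a j ≤ s j ∧ s j < dl j) ∧
        ∀ t : ℕ, (Finset.univ.filter fun j => s j = t).card ≤ m t) ↔
    (∀ ℓ r : ℕ, ℓ < r →
        (Finset.univ.filter fun j => ℓ ≤ a j ∧ dl j ≤ r).card ≤
          ∑ t ∈ Finset.Ico ℓ r, m t) := by
  classical
  constructor
  · rintro ⟨s, hfeas, hcount⟩ ℓ r hlr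
    have hsub : (Finset.univ.filter fun j => ℓ ≤ a j ∧ dl j ≤ r) ⊆
        (Finset.Ico ℓ r).biUnion fun t => Finset.univ.filter fun j => s j = t := by
      intro j hj
      simp only [Finset.mem_filter, Finset.mem_univ, true_and] at hj
      have := hfeas j
      simp only [Finset.mem_biUnion, Finset.mem_Ico, Finset.mem_filter, Finset.mem_univ,
        true_and]
      exact ⟨s j, ⟨by omega, by omega⟩, rfl⟩
    calc (Finset.univ.filter fun j => ℓ ≤ a j ∧ dl j ≤ r).card
        ≤ ((Finset.Ico ℓ r).biUnion fun t => Finset.univ.filter fun j => s j = t).card :=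
          Finset.card_le_card hsub
      _ ≤ ∑ t ∈ Finset.Ico ℓ r, (Finset.univ.filter fun j => s j = t).card :=
          Finset.card_biUnion_le
      _ ≤ ∑ t ∈ Finset.Ico ℓ r, m t := Finset.sum_le_sum fun t _ => hcount t
  · intro hcap
    -- slots
    set slots : ι → Finset (ℕ × ℕ) := fun j =>
      (Finset.Ico (a j) (dl j)).biUnion fun u => (Finset.range (m u)).image fun k => (u, k)
      with hslots
    have hg_card : ∀ (V : Finset ℕ),
        (V.biUnion fun u => (Finset.range (m u)).image fun k => (u, k)).card =
          ∑ u ∈ V, m u := by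
      intro V
      rw [Finset.card_biUnion]
      · refine Finset.sum_congr rfl fun u _ => ?_
        rw [Finset.card_image_of_injective _ (by intro x y h; simpa using h)]
        simp
      · intro x _ y _ hxy
        simp only [Finset.disjoint_left, Finset.mem_image, Finset.mem_range]
        rintro p ⟨k, _, rfl⟩ ⟨k', _, hk'⟩
        exact hxy (by simpa using (Prod.mk.injEq .. ▸ hk').1.symm ▸ rfl)
    have hhall : ∀ S : Finset ι, S.card ≤ (S.biUnion slots).card := by
      intro S
      set U := S.biUnion fun j => Finset.Ico (a j) (dl j) with hU
      have hbi : S.biUnion slots =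
          U.biUnion fun u => (Finset.range (m u)).image fun k => (u, k) := by
        rw [hU, Finset.biUnion_biUnion]
      have hSsub : S ⊆ Finset.univ.filter fun j => Finset.Ico (a j) (dl j) ⊆ U := by
        intro j hj
        simp only [Finset.mem_filter, Finset.mem_univ, true_and]
        exact fun u hu => Finset.mem_biUnion.mpr ⟨j, hj, hu⟩
      calc S.card ≤ (Finset.univ.filter fun j => Finset.Ico (a j) (dl j) ⊆ U).card :=
            Finset.card_le_card hSsub
        _ ≤ ∑ u ∈ U, m u := key_capacity a dl hjob m hcap U
        _ = (S.biUnion slots).card := by rw [hbi, hg_card]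
    obtain ⟨f, hfinj, hf⟩ := (Finset.all_card_le_biUnion_card_iff_exists_injective slots).mp hhall
    have hf' : ∀ j, (a j ≤ (f j).1 ∧ (f j).1 < dl j) ∧ (f j).2 < m (f j).1 := by
      intro j
      have := hf j
      simp only [hslots, Finset.mem_biUnion, Finset.mem_Ico, Finset.mem_image,
        Finset.mem_range] at this
      obtain ⟨u, hu, k, hk, hfk⟩ := this
      rw [← hfk]
      exact ⟨hu, hk⟩
    refine ⟨fun j => (f j).1, fun j => (hf' j).1, fun t => ?_⟩
    have : ∀ j ∈ Finset.univ.filter fun j => (f j).1 = t, (f j).2 ∈ Finset.range (m t) := by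
      intro j hj
      simp only [Finset.mem_filter, Finset.mem_univ, true_and] at hj
      simp only [Finset.mem_range]
      exact hj ▸ (hf' j).2
    refine le_trans (Finset.card_le_card_of_injOn (fun j => (f j).2) this ?_) (by simp)
    intro i hi j hj hije
    simp only [Finset.coe_filter, Set.mem_setOf_eq, Finset.mem_univ, true_and] at hi hj
    exact hfinj (Prod.ext (hi.trans hj.symm) hije)
end

section
/- For any finite nonempty set J of unit jobs, the minimum number of machines needed to schedule J satisfies OPT(J) = ⌈ max_{0≤ℓ<r} J(ℓ,r)/(r−ℓ) ⌉, where the maximum is over all pairs of natural numbers 0 ≤ ℓ < r (it is attained, since the density is 0 once r exceeds the largest deadline). -/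
open Finset

lemma hall_aux {ι : Type*} [Fintype ι] (a dl : ι → ℕ) (hjob : ∀ j, a j < dl j) (n : ℕ)
    (H : ∀ ℓ r : ℕ, ℓ < r → (Finset.univ.filter fun j => ℓ ≤ a j ∧ dl j ≤ r).card ≤ n * (r - ℓ)) :
    ∀ S : Finset ι, S.card ≤ n * (S.biUnion fun j => Finset.Ico (a j) (dl j)).card := by
  intro S
  induction S using Finset.strongInduction with
  | _ S ih =>
    rcases S.eq_empty_or_nonempty with rfl | hS
    · simp
    obtain ⟨j₀, hj₀, hmin⟩ := S.exists_min_image a hS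
    set ℓ := a j₀ with hℓ
    set U := S.biUnion fun j => Finset.Ico (a j) (dl j) with hU
    have hTne : ∃ t, ℓ < t ∧ t ∉ U := by
      refine ⟨ℓ + U.sup id + 1, by omega, fun h => ?_⟩
      have := Finset.le_sup (f := id) h
      simp only [id] at this; omega
    set r := sInf {t | ℓ < t ∧ t ∉ U} with hr
    have hrmem : ℓ < r ∧ r ∉ U := Nat.sInf_mem hTne
    have hIco : ∀ t, ℓ ≤ t → t < r → t ∈ U := by
      intro t h1 h2
      rcases eq_or_lt_of_le h1 with rfl | h1'
      · exact Finset.mem_biUnion.2 ⟨j₀, hj₀, by simp [hℓ, hjob j₀]⟩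
      · by_contra hc
        have : r ≤ t := Nat.sInf_le (show t ∈ {t | ℓ < t ∧ t ∉ U} from ⟨h1', hc⟩)
        omega
    -- split S
    have hkey : ∀ j ∈ S, ¬ dl j ≤ r → r < a j := by
      intro j hj hdl
      by_contra hc
      exact hrmem.2 (Finset.mem_biUnion.2 ⟨j, hj, Finset.mem_Ico.2 ⟨by omega, by omega⟩⟩)
    set S₁ := S.filter (fun j => dl j ≤ r) with hS₁
    set S₂ := S.filter (fun j => ¬ dl j ≤ r) with hS₂
    have hj₀S₁ : j₀ ∈ S₁ := by
      refine Finset.mem_filter.2 ⟨hj₀, ?_⟩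
      by_contra hc
      exact hrmem.2 (Finset.mem_biUnion.2 ⟨j₀, hj₀, Finset.mem_Ico.2 ⟨by omega, by omega⟩⟩)
    have hS₂ss : S₂ ⊂ S := by
      refine Finset.ssubset_iff_of_subset (Finset.filter_subset _ _) |>.2 ⟨j₀, hj₀, ?_⟩
      simp only [hS₂, Finset.mem_filter, not_and, not_not]
      intro _
      exact (Finset.mem_filter.1 hj₀S₁).2
    have hcard1 : S₁.card ≤ n * (r - ℓ) := by
      refine le_trans (Finset.card_le_card ?_) (H ℓ r hrmem.1)
      intro j hj
      simp only [hS₁, Finset.mem_filter] at hj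
      exact Finset.mem_filter.2 ⟨Finset.mem_univ _, hmin j hj.1, hj.2⟩
    set U₂ := S₂.biUnion fun j => Finset.Ico (a j) (dl j) with hU₂
    have hcard2 : S₂.card ≤ n * U₂.card := ih S₂ hS₂ss
    have hdisj : Disjoint (Finset.Ico ℓ r) U₂ := by
      rw [Finset.disjoint_left]
      intro t ht ht2
      obtain ⟨j, hj, hjt⟩ := Finset.mem_biUnion.1 ht2
      simp only [hS₂, Finset.mem_filter] at hj
      have := hkey j hj.1 hj.2
      simp only [Finset.mem_Ico] at ht hjt
      omega
    have hsub : Finset.Ico ℓ r ∪ U₂ ⊆ U := by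
      refine Finset.union_subset (fun t ht => hIco t (Finset.mem_Ico.1 ht).1 (Finset.mem_Ico.1 ht).2) ?_
      exact Finset.biUnion_subset_biUnion_of_subset_left _ (Finset.filter_subset _ _)
    have hUcard : (r - ℓ) + U₂.card ≤ U.card := by
      have := Finset.card_le_card hsub
      rwa [Finset.card_union_of_disjoint hdisj, Nat.card_Ico] at this
    have hsplit : S.card = S₁.card + S₂.card := (Finset.card_filter_add_card_filter_not _).symm
    calc S.card = S₁.card + S₂.card := hsplit
      _ ≤ n * (r - ℓ) + n * U₂.card := by omega
      _ = n * ((r - ℓ) + U₂.card) := by ring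
      _ ≤ n * U.card := Nat.mul_le_mul_left _ hUcard

lemma sched_exists {ι : Type*} [Fintype ι] (a dl : ι → ℕ) (hjob : ∀ j, a j < dl j) (n : ℕ)
    (H : ∀ ℓ r : ℕ, ℓ < r → (Finset.univ.filter fun j => ℓ ≤ a j ∧ dl j ≤ r).card ≤ n * (r - ℓ)) :
    ∃ s : ι → ℕ, (∀ j, a j ≤ s j ∧ s j < dl j) ∧
      ∀ t : ℕ, (Finset.univ.filter fun j => s j = t).card ≤ n := by
  have hall : ∀ S : Finset ι,
      S.card ≤ (S.biUnion fun j => Finset.Ico (a j) (dl j) ×ˢ (Finset.univ : Finset (Fin n))).card := by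
    intro S
    have heq : (S.biUnion fun j => Finset.Ico (a j) (dl j) ×ˢ (Finset.univ : Finset (Fin n)))
        = (S.biUnion fun j => Finset.Ico (a j) (dl j)) ×ˢ (Finset.univ : Finset (Fin n)) := by
      ext ⟨x, y⟩
      simp [Finset.mem_biUnion, Finset.mem_product, and_comm]
    rw [heq, Finset.card_product, Finset.card_fin]
    simpa [mul_comm] using hall_aux a dl hjob n H S
  obtain ⟨f, hfinj, hf⟩ := (Finset.all_card_le_biUnion_card_iff_exists_injective _).1 hall
  refine ⟨fun j => (f j).1, ?_, ?_⟩
  · intro j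
    have := hf j
    rw [Finset.mem_product, Finset.mem_Ico] at this
    exact this.1
  · intro t
    have : ((Finset.univ.filter fun j => (f j).1 = t) : Finset ι).card ≤ (Finset.univ : Finset (Fin n)).card := by
      apply Finset.card_le_card_of_injOn (fun j => (f j).2)
      · intro j _; exact Finset.mem_univ _
      · intro i hi j hj hij
        simp only [Finset.mem_coe, Finset.mem_filter] at hi hj
        apply hfinj
        exact Prod.ext (hi.2.trans hj.2.symm) hij
    simpa using this

/-- For a finite nonempty set of unit jobs, the minimum number of
machines `OPT(J)` (the least `n` such that some feasible schedule runs at most `n`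
jobs at every time) equals `⌈ max_{0≤ℓ<r} J(ℓ,r)/(r−ℓ) ⌉`, the maximum being
attained at some pair `ℓ < r`. -/
theorem opt_eq_ceil_max_density {ι : Type*} [Fintype ι] [Nonempty ι]
    (a dl : ι → ℕ) (hjob : ∀ j, a j < dl j) :
    ∃ ℓ r : ℕ, ℓ < r ∧
      (∀ ℓ' r' : ℕ, ℓ' < r' →
        ((Finset.univ.filter fun j => ℓ' ≤ a j ∧ dl j ≤ r').card : ℚ) / ((r' : ℚ) - (ℓ' : ℚ)) ≤
          ((Finset.univ.filter fun j => ℓ ≤ a j ∧ dl j ≤ r).card : ℚ) / ((r : ℚ) - (ℓ : ℚ))) ∧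
      sInf {n : ℕ | ∃ s : ι → ℕ, (∀ j, a j ≤ s j ∧ s j < dl j) ∧
          ∀ t : ℕ, (Finset.univ.filter fun j => s j = t).card ≤ n} =
        ⌈((Finset.univ.filter fun j => ℓ ≤ a j ∧ dl j ≤ r).card : ℚ) / ((r : ℚ) - (ℓ : ℚ))⌉₊ := by
  classical
  set c : ℕ → ℕ → ℕ := fun ℓ r => (Finset.univ.filter fun j => ℓ ≤ a j ∧ dl j ≤ r).card with hc
  set d : ℕ → ℕ → ℚ := fun ℓ r => (c ℓ r : ℚ) / ((r : ℚ) - (ℓ : ℚ)) with hd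
  set D : ℕ := Finset.univ.sup dl with hD
  have hdlD : ∀ j, dl j ≤ D := fun j => Finset.le_sup (Finset.mem_univ j)
  obtain ⟨j₁⟩ := ‹Nonempty ι›
  set P : Finset (ℕ × ℕ) := (Finset.range D ×ˢ Finset.Icc 1 D).filter fun p => p.1 < p.2 with hP
  have hmemP : ∀ ℓ' r' : ℕ, ℓ' < r' → r' ≤ D → (ℓ', r') ∈ P := by
    intro ℓ' r' h1 h2
    refine Finset.mem_filter.2 ⟨Finset.mem_product.2 ⟨?_, ?_⟩, h1⟩
    · exact Finset.mem_range.2 (by omega)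
    · exact Finset.mem_Icc.2 ⟨by omega, h2⟩
  have hPne : P.Nonempty := ⟨(a j₁, dl j₁), hmemP _ _ (hjob j₁) (hdlD j₁)⟩
  obtain ⟨⟨ℓ, r⟩, hmemp, hmaxP⟩ := P.exists_max_image (fun p => d p.1 p.2) hPne
  have hℓr : ℓ < r := (Finset.mem_filter.1 hmemp).2
  have hdnonneg : 0 ≤ d ℓ r := by
    apply div_nonneg (Nat.cast_nonneg _)
    have : (ℓ : ℚ) < (r : ℚ) := by exact_mod_cast hℓr
    linarith
  have hmax : ∀ ℓ' r' : ℕ, ℓ' < r' → d ℓ' r' ≤ d ℓ r := by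
    intro ℓ' r' h1
    rcases le_or_gt r' D with h2 | h2
    · exact hmaxP (ℓ', r') (hmemP _ _ h1 h2)
    · have hcEq : c ℓ' r' = c ℓ' D := by
        simp only [hc]
        congr 1
        apply Finset.filter_congr
        intro j _
        have h3 := hdlD j
        constructor
        · rintro ⟨h4, _⟩; exact ⟨h4, h3⟩
        · rintro ⟨h4, h5⟩; exact ⟨h4, by omega⟩
      rcases lt_or_ge ℓ' D with h3 | h3
      · have hle : d ℓ' D ≤ d ℓ r := hmaxP (ℓ', D) (hmemP _ _ h3 le_rfl)
        refine le_trans ?_ hle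
        simp only [hd, hcEq]
        apply div_le_div_of_nonneg_left (Nat.cast_nonneg _)
        · have : (ℓ' : ℚ) < (D : ℚ) := by exact_mod_cast h3
          linarith
        · have : (D : ℚ) ≤ (r' : ℚ) := by exact_mod_cast h2.le
          linarith
      · have hzero : c ℓ' r' = 0 := by
          simp only [hc, Finset.card_eq_zero, Finset.filter_eq_empty_iff]
          intro j _
          have h4 := hjob j
          have h5 := hdlD j
          omega
        simp only [hd, hzero, Nat.cast_zero, zero_div]
        exact hdnonneg
  refine ⟨ℓ, r, hℓr, hmax, ?_⟩
  have hrℓpos : (0 : ℚ) < (r : ℚ) - (ℓ : ℚ) := by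
    have : (ℓ : ℚ) < (r : ℚ) := by exact_mod_cast hℓr
    linarith
  set N : ℕ := ⌈d ℓ r⌉₊ with hN
  have H' : ∀ ℓ' r' : ℕ, ℓ' < r' →
      (Finset.univ.filter fun j => ℓ' ≤ a j ∧ dl j ≤ r').card ≤ N * (r' - ℓ') := by
    intro ℓ' r' h1
    have hpos : (0 : ℚ) < (r' : ℚ) - (ℓ' : ℚ) := by
      have : (ℓ' : ℚ) < (r' : ℚ) := by exact_mod_cast h1
      linarith
    have h := (hmax ℓ' r' h1).trans (Nat.le_ceil _)
    rw [hd, div_le_iff₀ hpos] at h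
    have : (c ℓ' r' : ℚ) ≤ (N : ℚ) * ((r' - ℓ' : ℕ) : ℚ) := by
      rw [Nat.cast_sub h1.le]; exact h
    exact_mod_cast this
  have hmem : N ∈ {n : ℕ | ∃ s : ι → ℕ, (∀ j, a j ≤ s j ∧ s j < dl j) ∧
      ∀ t : ℕ, (Finset.univ.filter fun j => s j = t).card ≤ n} :=
    sched_exists a dl hjob N H'
  have hlow : ∀ n ∈ {n : ℕ | ∃ s : ι → ℕ, (∀ j, a j ≤ s j ∧ s j < dl j) ∧
      ∀ t : ℕ, (Finset.univ.filter fun j => s j = t).card ≤ n}, N ≤ n := by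
    rintro n ⟨s, hs, hload⟩
    apply Nat.ceil_le.2
    rw [hd, div_le_iff₀ hrℓpos]
    have hnat : c ℓ r ≤ n * (r - ℓ) := by
      have hsub : (Finset.univ.filter fun j => ℓ ≤ a j ∧ dl j ≤ r) ⊆
          (Finset.Ico ℓ r).biUnion fun t => Finset.univ.filter fun j => s j = t := by
        intro j hj
        simp only [Finset.mem_filter, Finset.mem_univ, true_and] at hj
        refine Finset.mem_biUnion.2 ⟨s j, Finset.mem_Ico.2 ?_, by simp⟩
        have := (hs j).1
        have := (hs j).2
        omega
      calc c ℓ r ≤ ((Finset.Ico ℓ r).biUnion fun t => Finset.univ.filter fun j => s j = t).card :=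
            Finset.card_le_card hsub
        _ ≤ ∑ t ∈ Finset.Ico ℓ r, (Finset.univ.filter fun j => s j = t).card :=
            Finset.card_biUnion_le
        _ ≤ ∑ _t ∈ Finset.Ico ℓ r, n := Finset.sum_le_sum fun t _ => hload t
        _ = (r - ℓ) * n := by simp [Finset.sum_const, Nat.card_Ico, mul_comm]
        _ = n * (r - ℓ) := mul_comm _ _
    have : (c ℓ r : ℚ) ≤ (n : ℚ) * ((r - ℓ : ℕ) : ℚ) := by exact_mod_cast hnat
    rwa [Nat.cast_sub hℓr.le] at this
  exact Nat.le_antisymm (Nat.sInf_le hmem) (le_csInf ⟨N, hmem⟩ hlow)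
end

section
/- Let (d,σ) be a universal-deadline instance and let 0 ≤ t₁ < t₂ < d. Then ℓ_σ(t₁) ≤ ℓ_σ(t₂), i.e., the left end of the defining interval of the maximum online density is nondecreasing in time. -/
/-- The online density of the interval `[ℓ, t]` (all work seen up to time `t`,
universal deadline `d`): `(Σ_{i=ℓ}^{t} σ i) / (d − ℓ)`. -/
def onlineDensity (d : ℕ) (σ : ℕ → ℚ) (t ℓ : ℕ) : ℚ :=
  (∑ i ∈ Finset.Icc ℓ t, σ i) / ((d : ℚ) - (ℓ : ℚ))

/-- In a universal-deadline instance `(d, σ)`, the left end of the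
defining interval of the maximum online density is nondecreasing in time: if
`ℓ₁` (resp. `ℓ₂`) is the smallest maximizer of `ℓ ↦ onlineDensity d σ t₁ ℓ` over
`ℓ ≤ t₁` (resp. of `ℓ ↦ onlineDensity d σ t₂ ℓ` over `ℓ ≤ t₂`) and `t₁ < t₂ < d`,
then `ℓ₁ ≤ ℓ₂`. -/
theorem defining_interval_left_end_monotone (d : ℕ) (σ : ℕ → ℚ) (hσ : ∀ i, 0 ≤ σ i)
    (t₁ t₂ : ℕ) (h12 : t₁ < t₂) (h2d : t₂ < d)
    (ℓ₁ ℓ₂ : ℕ) (hℓ₁ : ℓ₁ ≤ t₁) (hℓ₂ : ℓ₂ ≤ t₂)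
    (hmax₁ : ∀ ℓ ≤ t₁, onlineDensity d σ t₁ ℓ ≤ onlineDensity d σ t₁ ℓ₁)
    (hmin₁ : ∀ ℓ < ℓ₁, onlineDensity d σ t₁ ℓ < onlineDensity d σ t₁ ℓ₁)
    (hmax₂ : ∀ ℓ ≤ t₂, onlineDensity d σ t₂ ℓ ≤ onlineDensity d σ t₂ ℓ₂)
    (hmin₂ : ∀ ℓ < ℓ₂, onlineDensity d σ t₂ ℓ < onlineDensity d σ t₂ ℓ₂) :
    ℓ₁ ≤ ℓ₂ := by
  by_contra hcon
  push_neg at hcon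
  set A : ℚ := ∑ i ∈ Finset.Ioc t₁ t₂, σ i with hAdef
  have hA0 : 0 ≤ A := Finset.sum_nonneg fun i _ => hσ i
  have hsplit : ∀ ℓ ≤ t₁, ∑ i ∈ Finset.Icc ℓ t₂, σ i
      = (∑ i ∈ Finset.Icc ℓ t₁, σ i) + A := by
    intro ℓ hℓ
    rw [hAdef, ← Finset.sum_union]
    · congr 1
      ext x
      simp only [Finset.mem_Icc, Finset.mem_union, Finset.mem_Ioc]
      omega
    · refine Finset.disjoint_left.2 fun x hx hx' => ?_
      exact absurd (Finset.mem_Icc.1 hx).2 (not_le.2 (Finset.mem_Ioc.1 hx').1)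
  set a : ℚ := ∑ i ∈ Finset.Icc ℓ₂ t₁, σ i
  set b : ℚ := ∑ i ∈ Finset.Icc ℓ₁ t₁, σ i
  set p : ℚ := (d : ℚ) - (ℓ₂ : ℚ) with hp
  set q : ℚ := (d : ℚ) - (ℓ₁ : ℚ) with hq
  have hℓ₁d : ℓ₁ < d := lt_of_le_of_lt hℓ₁ (h12.trans h2d)
  have hq0 : 0 < q := by
    rw [hq]; have : (ℓ₁ : ℚ) < d := by exact_mod_cast hℓ₁d
    linarith
  have hpq : q < p := by
    rw [hp, hq]
    have : (ℓ₂ : ℚ) < ℓ₁ := by exact_mod_cast hcon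
    linarith
  have hp0 : 0 < p := hq0.trans hpq
  have h1 : a / p < b / q := hmin₁ ℓ₂ hcon
  have h2 : (b + A) / q ≤ (a + A) / p := by
    have := hmax₂ ℓ₁ (hℓ₁.trans h12.le)
    rwa [onlineDensity, onlineDensity, hsplit ℓ₁ hℓ₁,
      hsplit ℓ₂ (le_of_lt (hcon.trans_le hℓ₁))] at this
  rw [div_lt_div_iff₀ hp0 hq0] at h1
  rw [div_le_div_iff₀ hq0 hp0] at h2
  nlinarith
end

section
/- Let d ≥ 1 and let J*₂ be the set of d² unit jobs in which d jobs arrive at each time t ∈ {0,…,d−1}, all with deadline d. If R is a nonnegative real and S is a feasible schedule of J*₂ satisfying #_S(t) ≤ R·(t+1) for every t ∈ {0,…,d−1}, then R ≥ 2d/(d+1). In particular, as d → ∞ this forces R ≥ 2. -/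
lemma sum_range_succ_real (n : ℕ) :
    (∑ t ∈ Finset.range n, ((t : ℝ) + 1)) = n * (n + 1) / 2 := by
  induction n with
  | zero => simp
  | succ k ih =>
    rw [Finset.sum_range_succ, ih]
    push_cast
    ring

/-- Consider the instance `J*₂` of `d²` unit jobs in which `d` jobs
arrive at each time `t ∈ {0,…,d−1}` (job `(t, i) : Fin d × Fin d` arrives at time `t`),
all with deadline `d`.  If `R ≥ 0` and `S` is a feasible schedule of `J*₂` that starts
at most `R·(t+1)` jobs at each time `t < d`, then `R ≥ 2d/(d+1)`. -/
theorem lower_bound_two (d : ℕ) (hd : 1 ≤ d) (R : ℝ) (hR : 0 ≤ R)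
    (s : Fin d × Fin d → ℕ)
    (hfeas : ∀ j, (j.1 : ℕ) ≤ s j ∧ s j < d)
    (hload : ∀ t : ℕ, t < d →
        ((Finset.univ.filter fun j => s j = t).card : ℝ) ≤ R * ((t : ℝ) + 1)) :
    2 * (d : ℝ) / ((d : ℝ) + 1) ≤ R := by
  have hcard : (Finset.univ : Finset (Fin d × Fin d)).card
      = ∑ t ∈ Finset.range d, (Finset.univ.filter fun j => s j = t).card :=
    Finset.card_eq_sum_card_fiberwise (fun j _ => Finset.mem_range.2 (hfeas j).2)
  have hcu : ((Finset.univ : Finset (Fin d × Fin d)).card : ℝ) = d * d := by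
    simp [Finset.card_univ]
  have h1 : (d : ℝ) * d ≤ R * (d * (d + 1) / 2) := by
    have h2 : ((Finset.univ : Finset (Fin d × Fin d)).card : ℝ)
        ≤ ∑ t ∈ Finset.range d, R * ((t : ℝ) + 1) := by
      rw [hcard]
      push_cast
      exact Finset.sum_le_sum fun t ht => hload t (Finset.mem_range.1 ht)
    rw [hcu, ← Finset.mul_sum, sum_range_succ_real] at h2
    exact h2
  have hd1 : (1 : ℝ) ≤ d := by exact_mod_cast hd
  rw [div_le_iff₀ (by linarith)]
  nlinarith [h1, hd1, mul_nonneg hR (by linarith : (0:ℝ) ≤ (d:ℝ) + 1)]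
end

section
/- Let d ≥ 1 and let J*₂ be the set of unit jobs in which d jobs arrive at each time t ∈ {0,…,d−1}, all with deadline d. For every t with 0 ≤ t < d, the sub-instance J*₂(t) consisting of the (t+1)·d jobs arriving at times 0,…,t satisfies OPT(J*₂(t)) = t+1. -/
/-- For the instance `J*₂` (with `d ≥ 1`, `d` unit jobs arriving at
each time in `{0,…,d−1}`, all with deadline `d`), the sub-instance `J*₂(t)` of the
`(t+1)·d` jobs arriving at times `0,…,t` (job `(u, i) : Fin (t+1) × Fin d` arrives at
time `u`) has optimal machine count `OPT(J*₂(t)) = t+1`. -/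
theorem opt_of_prefix_instance (d : ℕ) (hd : 1 ≤ d) (t : ℕ) (ht : t < d) :
    sInf {n : ℕ | ∃ s : Fin (t + 1) × Fin d → ℕ,
        (∀ j, (j.1 : ℕ) ≤ s j ∧ s j < d) ∧
        ∀ u : ℕ, (Finset.univ.filter fun j => s j = u).card ≤ n} = t + 1 := by
  have htd : t + 1 ≤ d := ht
  have hmem : t + 1 ∈ {n : ℕ | ∃ s : Fin (t + 1) × Fin d → ℕ,
      (∀ j, (j.1 : ℕ) ≤ s j ∧ s j < d) ∧
      ∀ u : ℕ, (Finset.univ.filter fun j => s j = u).card ≤ n} := by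
    refine ⟨fun j => ((j.1 : ℕ) * d + (j.2 : ℕ)) / (t + 1), fun j => ⟨?_, ?_⟩, ?_⟩
    · rw [Nat.le_div_iff_mul_le (Nat.succ_pos t)]
      calc (j.1 : ℕ) * (t + 1) ≤ (j.1 : ℕ) * d := Nat.mul_le_mul_left _ htd
        _ ≤ (j.1 : ℕ) * d + (j.2 : ℕ) := Nat.le_add_right _ _
    · rw [Nat.div_lt_iff_lt_mul (Nat.succ_pos t)]
      have h1 : (j.1 : ℕ) ≤ t := Nat.lt_succ_iff.mp j.1.isLt
      have h2 : (j.2 : ℕ) < d := j.2.isLt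
      calc (j.1 : ℕ) * d + (j.2 : ℕ) < (j.1 : ℕ) * d + d := by omega
        _ = ((j.1 : ℕ) + 1) * d := by ring
        _ ≤ (t + 1) * d := Nat.mul_le_mul_right _ (by omega)
        _ = d * (t + 1) := Nat.mul_comm _ _
    · intro v
      have hcard : (Finset.univ.filter fun j : Fin (t + 1) × Fin d =>
          ((j.1 : ℕ) * d + (j.2 : ℕ)) / (t + 1) = v).card
          ≤ (Finset.Ico (v * (t + 1)) ((v + 1) * (t + 1))).card := by
        apply Finset.card_le_card_of_injOn (fun j => (j.1 : ℕ) * d + (j.2 : ℕ))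
        · intro j hj
          simp only [Finset.mem_coe, Finset.mem_filter] at hj
          rw [Finset.mem_coe, Finset.mem_Ico]
          constructor
          · calc v * (t + 1) = (((j.1 : ℕ) * d + (j.2 : ℕ)) / (t + 1)) * (t + 1) := by
                  rw [hj.2]
              _ ≤ (j.1 : ℕ) * d + (j.2 : ℕ) := Nat.div_mul_le_self _ _
          · have hmod := Nat.div_add_mod ((j.1 : ℕ) * d + (j.2 : ℕ)) (t + 1)
            have hlt := Nat.mod_lt ((j.1 : ℕ) * d + (j.2 : ℕ)) (show 0 < t + 1 by omega)
            rw [hj.2] at hmod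
            calc (j.1 : ℕ) * d + (j.2 : ℕ)
                = (t + 1) * v + ((j.1 : ℕ) * d + (j.2 : ℕ)) % (t + 1) := hmod.symm
              _ < (t + 1) * v + (t + 1) := by omega
              _ = (v + 1) * (t + 1) := by ring
        · intro j1 _ j2 _ h
          simp only at h
          have hd1 : 0 < d := hd
          have e1 : ((j1.1 : ℕ) * d + (j1.2 : ℕ)) / d = (j1.1 : ℕ) := by
            rw [Nat.add_comm, Nat.add_mul_div_right _ _ hd1, Nat.div_eq_of_lt j1.2.isLt, Nat.zero_add]
          have e2 : ((j2.1 : ℕ) * d + (j2.2 : ℕ)) / d = (j2.1 : ℕ) := by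
            rw [Nat.add_comm, Nat.add_mul_div_right _ _ hd1, Nat.div_eq_of_lt j2.2.isLt, Nat.zero_add]
          have hu : (j1.1 : ℕ) = (j2.1 : ℕ) := by rw [← e1, ← e2, h]
          have hi : (j1.2 : ℕ) = (j2.2 : ℕ) := by
            rw [hu] at h; exact Nat.add_left_cancel h
          exact Prod.ext (Fin.ext hu) (Fin.ext hi)
      have : (Finset.Ico (v * (t + 1)) ((v + 1) * (t + 1))).card = t + 1 := by
        rw [Nat.card_Ico, Nat.succ_mul]; omega
      simpa [this] using hcard
  apply le_antisymm
  · exact Nat.sInf_le hmem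
  · apply le_csInf ⟨t + 1, hmem⟩
    rintro n ⟨s, hfeas, hbound⟩
    have hsum : ∑ v ∈ Finset.range d, (Finset.univ.filter fun j => s j = v).card
        = Fintype.card (Fin (t + 1) × Fin d) := by
      rw [← Finset.card_univ]
      exact (Finset.card_eq_sum_card_fiberwise
        (fun j _ => Finset.mem_range.mpr (hfeas j).2)).symm
    have hcard : Fintype.card (Fin (t + 1) × Fin d) = (t + 1) * d := by simp
    have hle : (t + 1) * d ≤ d * n := by
      calc (t + 1) * d = ∑ v ∈ Finset.range d, (Finset.univ.filter fun j => s j = v).card := by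
            rw [hsum, hcard]
        _ ≤ ∑ _v ∈ Finset.range d, n := Finset.sum_le_sum fun v _ => hbound v
        _ = d * n := by rw [Finset.sum_const, Finset.card_range, smul_eq_mul]
    have : d * (t + 1) ≤ d * n := by rwa [Nat.mul_comm] at hle
    exact Nat.le_of_mul_le_mul_left this hd
end

section
/- Consider the universal-deadline instance (32, σ*) with σ* = (75,75,…,75 [16 entries], 1200, 0, 0, 0, 300,300,…,300 [12 entries]). Then Σ_{t=0}^{31} 2·⌈ϱ̂_{σ*}(t)⌉ = 5990, while the total number of jobs Σ_{t=0}^{31} σ*(t) = 6000. Consequently, the packing-via-density algorithm of Shi and Ye, which executes 2·⌈ϱ̂_{σ*}(t)⌉ jobs at each time t, leaves exactly 10 jobs unfinished at their deadline. -/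
/-- The counter-example arrival sequence `σ* = (75,…,75 [16], 1200, 0, 0, 0,
300,…,300 [12])` with universal deadline `32`. -/
def sigmaStar : ℕ → ℚ := fun t =>
  if t < 16 then 75 else if t = 16 then 1200 else if t < 20 then 0 else 300

/-- The maximum online density at time `t` for the instance `(32, σ*)`:
`ϱ̂(t) = max_{0≤ℓ≤t} (Σ_{i=ℓ}^{t} σ*(i)) / (32 − ℓ)`. -/
def maxDensityStar (t : ℕ) : ℚ :=
  (Finset.range (t + 1)).sup' Finset.nonempty_range_add_one
    (fun ℓ => (∑ i ∈ Finset.Icc ℓ t, sigmaStar i) / ((32 : ℚ) - (ℓ : ℚ)))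

/-- Closed form of the prefix sums of `σ*`. -/
def Qs : ℕ → ℚ := fun n =>
  if n ≤ 16 then 75 * n else if n ≤ 20 then 2400 else 300 * n - 3600

lemma sumQ (n : ℕ) : ∑ i ∈ Finset.range n, sigmaStar i = Qs n := by
  induction n with
  | zero => simp [Qs]
  | succ n ih =>
    rw [Finset.sum_range_succ, ih]
    unfold Qs sigmaStar
    rcases lt_or_ge n 16 with h | h
    · rw [if_pos (show n ≤ 16 by omega), if_pos h, if_pos (show n + 1 ≤ 16 by omega)]
      push_cast; ring
    · rcases eq_or_lt_of_le h with h' | h'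
      · rw [← h']; norm_num
      · rcases lt_or_ge n 20 with h2 | h2
        · rw [if_neg (show ¬ n ≤ 16 by omega), if_pos (show n ≤ 20 by omega),
            if_neg (show ¬ n < 16 by omega), if_neg (show ¬ n = 16 by omega), if_pos h2,
            if_neg (show ¬ n + 1 ≤ 16 by omega), if_pos (show n + 1 ≤ 20 by omega)]
          norm_num
        · rcases eq_or_lt_of_le h2 with h3 | h3
          · rw [← h3]; norm_num
          · rw [if_neg (show ¬ n ≤ 16 by omega), if_neg (show ¬ n ≤ 20 by omega),
              if_neg (show ¬ n < 16 by omega), if_neg (show ¬ n = 16 by omega),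
              if_neg (show ¬ n < 20 by omega),
              if_neg (show ¬ n + 1 ≤ 16 by omega), if_neg (show ¬ n + 1 ≤ 20 by omega)]
            push_cast; ring

lemma sumIcc (l t : ℕ) (h : l ≤ t) :
    ∑ i ∈ Finset.Icc l t, sigmaStar i = Qs (t + 1) - Qs l := by
  rw [← Finset.Ico_add_one_right_eq_Icc, Finset.sum_Ico_eq_sub _ (by omega), sumQ, sumQ]

lemma md_lower (t l : ℕ) (hl : l ≤ t) :
    (Qs (t + 1) - Qs l) / ((32 : ℚ) - l) ≤ maxDensityStar t := by
  rw [← sumIcc l t hl, maxDensityStar]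
  exact Finset.le_sup' (fun ℓ : ℕ => (∑ i ∈ Finset.Icc ℓ t, sigmaStar i) / ((32 : ℚ) - (ℓ : ℚ)))
    (Finset.mem_range.mpr (Nat.lt_succ_of_le hl))

lemma mdA (t : ℕ) (ht : t ≤ 15) : maxDensityStar t = 75 * ((t : ℚ) + 1) / 32 := by
  have htq : (t : ℚ) ≤ 15 := by exact_mod_cast ht
  apply le_antisymm
  · apply Finset.sup'_le
    intro l hl
    rw [Finset.mem_range] at hl
    have hlq : (l : ℚ) ≤ (t : ℚ) := by exact_mod_cast Nat.lt_succ_iff.mp hl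
    have hl0 : (0 : ℚ) ≤ l := by positivity
    rw [sumIcc l t (by omega)]
    rw [div_le_div_iff₀ (by linarith) (by norm_num)]
    have e1 : Qs (t + 1) = 75 * ((t : ℚ) + 1) := by
      unfold Qs; rw [if_pos (by omega)]; push_cast; ring
    have e2 : Qs l = 75 * (l : ℚ) := by
      unfold Qs; rw [if_pos (by omega)]
    rw [e1, e2]
    nlinarith
  · have h := md_lower t 0 (Nat.zero_le t)
    have e1 : Qs (t + 1) = 75 * ((t : ℚ) + 1) := by
      unfold Qs; rw [if_pos (by omega)]; push_cast; ring
    rw [e1] at h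
    simpa [Qs] using h

lemma mdB (t : ℕ) (h16 : 16 ≤ t) (h19 : t ≤ 19) : maxDensityStar t = 75 := by
  have e1 : Qs (t + 1) = 2400 := by
    unfold Qs; rw [if_neg (by omega), if_pos (by omega)]
  apply le_antisymm
  · apply Finset.sup'_le
    intro l hl
    rw [Finset.mem_range] at hl
    have hlq : (l : ℚ) ≤ 19 := by exact_mod_cast (by omega : l ≤ 19)
    have hl0 : (0 : ℚ) ≤ l := by positivity
    rw [sumIcc l t (by omega), e1]
    rw [div_le_iff₀ (by linarith)]
    rcases le_or_gt l 16 with h | h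
    · have e2 : Qs l = 75 * (l : ℚ) := by unfold Qs; rw [if_pos h]
      rw [e2]; linarith
    · have e2 : Qs l = 2400 := by unfold Qs; rw [if_neg (by omega), if_pos (by omega)]
      rw [e2]; linarith
  · have h := md_lower t 0 (Nat.zero_le t)
    rw [e1] at h
    have : Qs 0 = 0 := by norm_num [Qs]
    rw [this] at h
    norm_num at h
    convert h using 2 <;> norm_num

lemma mdC (t : ℕ) (h20 : 20 ≤ t) (h31 : t ≤ 31) :
    maxDensityStar t = (300 * (t : ℚ) - 4500) / 16 := by
  have htq : (t : ℚ) ≤ 31 := by exact_mod_cast h31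
  have htq2 : (20 : ℚ) ≤ t := by exact_mod_cast h20
  have e1 : Qs (t + 1) = 300 * (t : ℚ) - 3300 := by
    unfold Qs; rw [if_neg (by omega), if_neg (by omega)]; push_cast; ring
  apply le_antisymm
  · apply Finset.sup'_le
    intro l hl
    rw [Finset.mem_range] at hl
    have hlt : l ≤ t := by omega
    have hlq : (l : ℚ) ≤ (t : ℚ) := by exact_mod_cast hlt
    have hl0 : (0 : ℚ) ≤ l := by positivity
    rw [sumIcc l t hlt, e1]
    rw [div_le_div_iff₀ (by linarith) (by norm_num)]
    rcases le_or_gt l 16 with h | h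
    · have hq : (l : ℚ) ≤ 16 := by exact_mod_cast h
      have e2 : Qs l = 75 * (l : ℚ) := by unfold Qs; rw [if_pos h]
      rw [e2]
      nlinarith [mul_nonneg (by linarith : (0:ℚ) ≤ (t : ℚ) - 19) (by linarith : (0:ℚ) ≤ 16 - (l : ℚ))]
    · rcases le_or_gt l 20 with h' | h'
      · have hq : (l : ℚ) ≤ 20 := by exact_mod_cast h'
        have hq2 : (16 : ℚ) < l := by exact_mod_cast h
        have e2 : Qs l = 2400 := by unfold Qs; rw [if_neg (by omega), if_pos h']
        rw [e2]
        nlinarith [mul_nonneg (by linarith : (0:ℚ) ≤ 31 - (t : ℚ)) (by linarith : (0:ℚ) ≤ (l : ℚ) - 16)]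
      · have hq : (20 : ℚ) < l := by exact_mod_cast h'
        have e2 : Qs l = 300 * (l : ℚ) - 3600 := by
          unfold Qs; rw [if_neg (by omega), if_neg (by omega)]
        rw [e2]
        nlinarith [mul_nonneg (by linarith : (0:ℚ) ≤ 31 - (t : ℚ)) (by linarith : (0:ℚ) ≤ (l : ℚ) - 16)]
  · have h := md_lower t 16 (by omega)
    rw [e1] at h
    have e2 : Qs 16 = 1200 := by norm_num [Qs]
    rw [e2] at h
    have : ((32 : ℚ) - (16 : ℕ)) = 16 := by norm_num
    rw [this] at h
    convert h using 2
    rfl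
    ring

/-- On the instance `(32, σ*)`, the packing-via-density algorithm of
Shi and Ye, executing `2·⌈ϱ̂(t)⌉` jobs at each time `t`, can schedule at most
`Σ_{t=0}^{31} 2·⌈ϱ̂(t)⌉ = 5990` jobs, while there are `Σ_{t=0}^{31} σ*(t) = 6000` jobs
in total: exactly `10` jobs miss their deadline. -/
theorem packing_via_density_infeasible :
    (∑ t ∈ Finset.range 32, 2 * ⌈maxDensityStar t⌉) = 5990 ∧
    (∑ t ∈ Finset.range 32, sigmaStar t) = 6000 ∧
    (6000 : ℤ) - (∑ t ∈ Finset.range 32, 2 * ⌈maxDensityStar t⌉) = 10 := by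
  have e0 : ⌈maxDensityStar 0⌉ = 3 := by rw [mdA 0 (by norm_num)]; rw [Int.ceil_eq_iff]; norm_num
  have e1 : ⌈maxDensityStar 1⌉ = 5 := by rw [mdA 1 (by norm_num)]; rw [Int.ceil_eq_iff]; norm_num
  have e2 : ⌈maxDensityStar 2⌉ = 8 := by rw [mdA 2 (by norm_num)]; rw [Int.ceil_eq_iff]; norm_num
  have e3 : ⌈maxDensityStar 3⌉ = 10 := by rw [mdA 3 (by norm_num)]; rw [Int.ceil_eq_iff]; norm_num
  have e4 : ⌈maxDensityStar 4⌉ = 12 := by rw [mdA 4 (by norm_num)]; rw [Int.ceil_eq_iff]; norm_num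
  have e5 : ⌈maxDensityStar 5⌉ = 15 := by rw [mdA 5 (by norm_num)]; rw [Int.ceil_eq_iff]; norm_num
  have e6 : ⌈maxDensityStar 6⌉ = 17 := by rw [mdA 6 (by norm_num)]; rw [Int.ceil_eq_iff]; norm_num
  have e7 : ⌈maxDensityStar 7⌉ = 19 := by rw [mdA 7 (by norm_num)]; rw [Int.ceil_eq_iff]; norm_num
  have e8 : ⌈maxDensityStar 8⌉ = 22 := by rw [mdA 8 (by norm_num)]; rw [Int.ceil_eq_iff]; norm_num
  have e9 : ⌈maxDensityStar 9⌉ = 24 := by rw [mdA 9 (by norm_num)]; rw [Int.ceil_eq_iff]; norm_num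
  have e10 : ⌈maxDensityStar 10⌉ = 26 := by rw [mdA 10 (by norm_num)]; rw [Int.ceil_eq_iff]; norm_num
  have e11 : ⌈maxDensityStar 11⌉ = 29 := by rw [mdA 11 (by norm_num)]; rw [Int.ceil_eq_iff]; norm_num
  have e12 : ⌈maxDensityStar 12⌉ = 31 := by rw [mdA 12 (by norm_num)]; rw [Int.ceil_eq_iff]; norm_num
  have e13 : ⌈maxDensityStar 13⌉ = 33 := by rw [mdA 13 (by norm_num)]; rw [Int.ceil_eq_iff]; norm_num
  have e14 : ⌈maxDensityStar 14⌉ = 36 := by rw [mdA 14 (by norm_num)]; rw [Int.ceil_eq_iff]; norm_num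
  have e15 : ⌈maxDensityStar 15⌉ = 38 := by rw [mdA 15 (by norm_num)]; rw [Int.ceil_eq_iff]; norm_num
  have e16 : ⌈maxDensityStar 16⌉ = 75 := by rw [mdB 16 (by norm_num) (by norm_num)]; rw [Int.ceil_eq_iff]; norm_num
  have e17 : ⌈maxDensityStar 17⌉ = 75 := by rw [mdB 17 (by norm_num) (by norm_num)]; rw [Int.ceil_eq_iff]; norm_num
  have e18 : ⌈maxDensityStar 18⌉ = 75 := by rw [mdB 18 (by norm_num) (by norm_num)]; rw [Int.ceil_eq_iff]; norm_num
  have e19 : ⌈maxDensityStar 19⌉ = 75 := by rw [mdB 19 (by norm_num) (by norm_num)]; rw [Int.ceil_eq_iff]; norm_num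
  have e20 : ⌈maxDensityStar 20⌉ = 94 := by rw [mdC 20 (by norm_num) (by norm_num)]; rw [Int.ceil_eq_iff]; norm_num
  have e21 : ⌈maxDensityStar 21⌉ = 113 := by rw [mdC 21 (by norm_num) (by norm_num)]; rw [Int.ceil_eq_iff]; norm_num
  have e22 : ⌈maxDensityStar 22⌉ = 132 := by rw [mdC 22 (by norm_num) (by norm_num)]; rw [Int.ceil_eq_iff]; norm_num
  have e23 : ⌈maxDensityStar 23⌉ = 150 := by rw [mdC 23 (by norm_num) (by norm_num)]; rw [Int.ceil_eq_iff]; norm_num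
  have e24 : ⌈maxDensityStar 24⌉ = 169 := by rw [mdC 24 (by norm_num) (by norm_num)]; rw [Int.ceil_eq_iff]; norm_num
  have e25 : ⌈maxDensityStar 25⌉ = 188 := by rw [mdC 25 (by norm_num) (by norm_num)]; rw [Int.ceil_eq_iff]; norm_num
  have e26 : ⌈maxDensityStar 26⌉ = 207 := by rw [mdC 26 (by norm_num) (by norm_num)]; rw [Int.ceil_eq_iff]; norm_num
  have e27 : ⌈maxDensityStar 27⌉ = 225 := by rw [mdC 27 (by norm_num) (by norm_num)]; rw [Int.ceil_eq_iff]; norm_num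
  have e28 : ⌈maxDensityStar 28⌉ = 244 := by rw [mdC 28 (by norm_num) (by norm_num)]; rw [Int.ceil_eq_iff]; norm_num
  have e29 : ⌈maxDensityStar 29⌉ = 263 := by rw [mdC 29 (by norm_num) (by norm_num)]; rw [Int.ceil_eq_iff]; norm_num
  have e30 : ⌈maxDensityStar 30⌉ = 282 := by rw [mdC 30 (by norm_num) (by norm_num)]; rw [Int.ceil_eq_iff]; norm_num
  have e31 : ⌈maxDensityStar 31⌉ = 300 := by rw [mdC 31 (by norm_num) (by norm_num)]; rw [Int.ceil_eq_iff]; norm_num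
  have hsum : (∑ t ∈ Finset.range 32, 2 * ⌈maxDensityStar t⌉) = 5990 := by
    simp only [Finset.sum_range_succ, Finset.sum_range_zero, e0, e1, e2, e3, e4, e5, e6, e7, e8, e9, e10, e11, e12, e13, e14, e15, e16, e17, e18, e19, e20, e21, e22, e23, e24, e25, e26, e27, e28, e29, e30, e31]
    norm_num
  refine ⟨hsum, ?_, by rw [hsum]; norm_num⟩
  rw [sumQ 32]
  norm_num [Qs]
end

section
/- Let h ≥ 1, k ≥ 2, α ≥ 2 be natural numbers and consider the universal-deadline instance (kα², σ*_{k,α}) where σ*_{k,α}(iα²+j) = h·α^i·(k−1)!/(k−i−1)! for 0 ≤ i < k and 0 ≤ j < α² (equivalently, σ*_{k,α}(iα²+j) = h for i = 0 and σ*_{k,α}(iα²+j) = α(k−i)·σ*_{k,α}((i−1)α²+j) for i > 0). Then for every time t = iα²+j with 0 ≤ i < k and 0 ≤ j < α²: ℓ_σ(t) = 0 if i = 0; ℓ_σ(t) = (i−1)α² if i > 0 and 0 ≤ j < α; and ℓ_σ(t) = iα² if i > 0 and α ≤ j < α². -/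
/-- The adversary arrival sequence `σ*_{k,α}`: for `t = iα² + j` with `0 ≤ i < k` and
`0 ≤ j < α²`, `σ*_{k,α}(t) = h·α^i·(k−1)!/(k−i−1)!` (equivalently `σ = h` on the first
block and each block is `α(k−i)` times the previous one). -/
def sigmaKA (h k α : ℕ) : ℕ → ℚ := fun t =>
  (h : ℚ) * (α : ℚ) ^ (t / α ^ 2) * (Nat.factorial (k - 1) : ℚ) /
    (Nat.factorial (k - 1 - t / α ^ 2) : ℚ)

def sVal (h k α m : ℕ) : ℚ :=
  (h : ℚ) * (α : ℚ) ^ m * (Nat.factorial (k - 1) : ℚ) /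
    (Nat.factorial (k - 1 - m) : ℚ)

lemma sigma_eq (h k α x : ℕ) : sigmaKA h k α x = sVal h k α (x / α ^ 2) := rfl

lemma sVal_pos (h k α m : ℕ) (hh : 1 ≤ h) (hα : 1 ≤ α) : 0 < sVal h k α m := by
  unfold sVal
  have h1 : (0:ℚ) < h := by exact_mod_cast hh
  have h2 : (0:ℚ) < α := by exact_mod_cast hα
  have h3 : (0:ℚ) < (Nat.factorial (k-1) : ℚ) := by exact_mod_cast (k-1).factorial_pos
  have h4 : (0:ℚ) < (Nat.factorial (k-1-m) : ℚ) := by exact_mod_cast (k-1-m).factorial_pos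
  positivity

lemma sVal_succ (h k α m : ℕ) (hm : m + 1 ≤ k - 1) :
    sVal h k α (m+1) = (α:ℚ) * ((k-1-m : ℕ):ℚ) * sVal h k α m := by
  have h1 : k-1-(m+1) = (k-1-m) - 1 := by omega
  have h2 : 0 < k-1-m := by omega
  have h3 : (k-1-m) * Nat.factorial (k-1-m-1) = Nat.factorial (k-1-m) := Nat.mul_factorial_pred h2.ne'
  unfold sVal
  rw [h1, pow_succ]
  have h4 : ((k-1-m : ℕ):ℚ) ≠ 0 := by positivity
  have h5 : ((Nat.factorial (k-1-m) : ℕ):ℚ) ≠ 0 := by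
    exact_mod_cast (Nat.factorial_pos _).ne'
  have h6 : ((Nat.factorial (k-1-m-1) : ℕ):ℚ) ≠ 0 := by
    exact_mod_cast (Nat.factorial_pos _).ne'
  field_simp
  rw [show ((Nat.factorial (k-1-m) : ℕ):ℚ) = ((k-1-m : ℕ):ℚ) * (Nat.factorial (k-1-m-1) : ℚ) by
    exact_mod_cast h3.symm]
  ring

lemma sigma_block (h k α : ℕ) (hα : 0 < α) {m a b : ℕ} (h1 : m * α ^ 2 ≤ a)
    (h2 : b ≤ (m+1) * α ^ 2) :
    ∑ x ∈ Finset.Ico a b, sigmaKA h k α x = ((b - a : ℕ):ℚ) * sVal h k α m := by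
  have hc : ∀ x ∈ Finset.Ico a b, sigmaKA h k α x = sVal h k α m := by
    intro x hx
    obtain ⟨hx1, hx2⟩ := Finset.mem_Ico.mp hx
    have hdiv : x / α ^ 2 = m :=
      Nat.div_eq_of_lt_le (le_trans h1 hx1) (lt_of_lt_of_le hx2 h2)
    rw [sigma_eq, hdiv]
  rw [Finset.sum_congr rfl hc, Finset.sum_const, Nat.card_Ico, nsmul_eq_mul]

lemma qaux2 (S A s n : ℚ) (hA : 0 < A) (hn : 0 < n) (h : s * A < S) :
    (S + n * s) / (A + n) < S / A := by
  rw [div_lt_div_iff₀ (by linarith) hA]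
  nlinarith

lemma qaux6 (S A s n₁ n₂ : ℚ) (h1 : 0 < A + n₁) (h2 : n₁ ≤ n₂) (h : S ≤ s * A) :
    (S + n₁ * s) / (A + n₁) ≤ (S + n₂ * s) / (A + n₂) := by
  rw [div_le_div_iff₀ h1 (by linarith)]
  nlinarith

lemma chain_le (f : ℕ → ℚ) {a b : ℕ} (hab : a ≤ b)
    (hstep : ∀ p, a ≤ p → p < b → f p ≤ f (p+1)) : f a ≤ f b := by
  induction b, hab using Nat.le_induction with
  | base => exact le_refl _
  | succ n hn ih =>
    exact le_trans (ih (fun p hp1 hp2 => hstep p hp1 (by omega))) (hstep n hn (by omega))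

lemma cast_sub1 (k p : ℕ) (hk : p + 1 ≤ k) : ((k-1-p : ℕ):ℚ) = (k:ℚ) - 1 - (p:ℚ) := by
  rw [show k-1-p = k - (1+p) by omega, Nat.cast_sub (by omega)]
  push_cast; ring

lemma key_strict (h k α i j : ℕ) (hh : 1 ≤ h) (hα : 2 ≤ α) (hik : i < k) (hj : j < α ^ 2)
    (p : ℕ) (hp : p + 1 ≤ i) (hcase : p + 2 ≤ i ∨ α ≤ j) :
    sVal h k α p * (((k:ℚ) - (p+1)) * (α:ℚ)^2) <
      ∑ x ∈ Finset.Ico ((p+1) * α ^ 2) (i * α ^ 2 + j + 1), sigmaKA h k α x := by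
  have hα1 : 1 ≤ α := by omega
  have hαq : (2:ℚ) ≤ (α:ℚ) := by exact_mod_cast hα
  have hsp := sVal_pos h k α p hh hα1
  have hσnn : ∀ x, 0 ≤ sigmaKA h k α x := fun x => le_of_lt (by
    rw [sigma_eq]; exact sVal_pos h k α _ hh hα1)
  by_cases hcase' : p + 2 ≤ i
  · -- interior: sum ≥ α² s_{p+1}
    have hcase : p + 2 ≤ i := hcase'
    have hsub : Finset.Ico ((p+1) * α ^ 2) ((p+2) * α ^ 2) ⊆
        Finset.Ico ((p+1) * α ^ 2) (i * α ^ 2 + j + 1) := by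
      apply Finset.Ico_subset_Ico le_rfl
      have : (p+2) * α ^ 2 ≤ i * α ^ 2 := Nat.mul_le_mul_right _ hcase
      omega
    have hlb : ∑ x ∈ Finset.Ico ((p+1) * α ^ 2) ((p+2) * α ^ 2), sigmaKA h k α x ≤
        ∑ x ∈ Finset.Ico ((p+1) * α ^ 2) (i * α ^ 2 + j + 1), sigmaKA h k α x :=
      Finset.sum_le_sum_of_subset_of_nonneg hsub (fun x _ _ => hσnn x)
    have hev : ∑ x ∈ Finset.Ico ((p+1) * α ^ 2) ((p+2) * α ^ 2), sigmaKA h k α x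
        = ((α ^ 2 : ℕ):ℚ) * sVal h k α (p+1) := by
      rw [sigma_block h k α (by omega) le_rfl (le_of_eq (by ring))]
      congr 2
      have : (p+2) * α ^ 2 = (p+1) * α ^ 2 + α ^ 2 := by ring
      omega
    have hsucc : sVal h k α (p+1) = (α:ℚ) * ((k-1-p : ℕ):ℚ) * sVal h k α p :=
      sVal_succ h k α p (by omega)
    calc sVal h k α p * (((k:ℚ) - (p+1)) * (α:ℚ)^2)
        < ((α ^ 2 : ℕ):ℚ) * sVal h k α (p+1) := by
          rw [hsucc, cast_sub1 k p (by omega)]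
          push_cast
          have hc1 : (1:ℚ) ≤ (k:ℚ) - 1 - (p:ℚ) := by
            have hx : p + 2 ≤ k := by omega
            have : ((p:ℚ) + 2) ≤ (k:ℚ) := by exact_mod_cast hx
            linarith
          have hfac : (0:ℚ) < (α:ℚ)^2 * ((k:ℚ)-1-(p:ℚ)) * sVal h k α p * ((α:ℚ)-1) :=
            mul_pos (mul_pos (mul_pos (by positivity) (by linarith)) hsp) (by linarith)
          nlinarith [hfac]
      _ ≤ _ := le_trans (le_of_eq hev.symm) hlb
  · -- boundary p+1 = i, α ≤ j
    have hpi : p + 1 = i := by omega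
    have hcase : α ≤ j := by
      rcases hcase with hc | hc
      · omega
      · exact hc
    have hev : ∑ x ∈ Finset.Ico ((p+1) * α ^ 2) (i * α ^ 2 + j + 1), sigmaKA h k α x
        = ((j + 1 : ℕ):ℚ) * sVal h k α i := by
      rw [hpi]
      rw [sigma_block h k α (by omega) le_rfl (by
        have : j + 1 ≤ α ^ 2 := by omega
        calc i * α ^ 2 + j + 1 ≤ i * α ^ 2 + α ^ 2 := by omega
          _ = (i+1) * α ^ 2 := by ring)]
      congr 2
      omega
    have hsucc : sVal h k α i = (α:ℚ) * ((k-1-p : ℕ):ℚ) * sVal h k α p := by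
      rw [← hpi]; exact sVal_succ h k α p (by omega)
    rw [hev, hsucc, cast_sub1 k p (by omega)]
    push_cast
    have hjq : (α:ℚ) ≤ (j:ℚ) := by exact_mod_cast hcase
    have hc1 : (1:ℚ) ≤ (k:ℚ) - 1 - (p:ℚ) := by
      have hx : p + 2 ≤ k := by omega
      have : ((p:ℚ) + 2) ≤ (k:ℚ) := by exact_mod_cast hx
      linarith
    have hfac : (0:ℚ) < (α:ℚ) * ((k:ℚ)-1-(p:ℚ)) * sVal h k α p * ((j:ℚ)+1-(α:ℚ)) :=
      mul_pos (mul_pos (mul_pos (by linarith) (by linarith)) hsp) (by linarith)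
    nlinarith [hfac]

lemma key_tail (h k α i j : ℕ) (hh : 1 ≤ h) (hα : 2 ≤ α) (hik : i < k) (hj : j < α ^ 2)
    (hi1 : 1 ≤ i) (hjα : j < α) :
    ∑ x ∈ Finset.Ico (i * α ^ 2) (i * α ^ 2 + j + 1), sigmaKA h k α x ≤
      sVal h k α (i-1) * (((k:ℚ) - i) * (α:ℚ)^2) := by
  have hα1 : 1 ≤ α := by omega
  have hαq : (2:ℚ) ≤ (α:ℚ) := by exact_mod_cast hα
  have hsp := sVal_pos h k α (i-1) hh hα1
  have hev : ∑ x ∈ Finset.Ico (i * α ^ 2) (i * α ^ 2 + j + 1), sigmaKA h k α x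
      = ((j + 1 : ℕ):ℚ) * sVal h k α i := by
    rw [sigma_block h k α (by omega) le_rfl (by
      calc i * α ^ 2 + j + 1 ≤ i * α ^ 2 + α ^ 2 := by omega
        _ = (i+1) * α ^ 2 := by ring)]
    congr 2
    omega
  have hsucc : sVal h k α i = (α:ℚ) * ((k-1-(i-1) : ℕ):ℚ) * sVal h k α (i-1) := by
    rw [show i = (i-1)+1 by omega] ; exact sVal_succ h k α (i-1) (by omega)
  rw [hev, hsucc]
  rw [show ((k-1-(i-1) : ℕ):ℚ) = (k:ℚ) - (i:ℚ) by
    rw [show k-1-(i-1) = k - i by omega, Nat.cast_sub (by omega)]]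
  push_cast
  have hjq : (j:ℚ) + 1 ≤ (α:ℚ) := by exact_mod_cast hjα
  have hki : (1:ℚ) ≤ (k:ℚ) - (i:ℚ) := by
    have : (i:ℚ) + 1 ≤ (k:ℚ) := by exact_mod_cast hik
    linarith
  have hfac : (0:ℚ) ≤ (α:ℚ) * ((k:ℚ)-(i:ℚ)) * sVal h k α (i-1) * ((α:ℚ)-((j:ℚ)+1)) :=
    mul_nonneg (mul_nonneg (mul_nonneg (by linarith) (by linarith)) (le_of_lt hsp)) (by linarith)
  nlinarith [hfac]

lemma master (h k α i j q : ℕ) (hh : 1 ≤ h) (hα : 2 ≤ α) (hik : i < k) (hj : j < α ^ 2)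
    (hqi : q ≤ i) (hiq : i ≤ q + 1)
    (hstrict : ∀ p, p + 1 ≤ q →
      sVal h k α p * (((k:ℚ) - (p+1)) * (α:ℚ)^2) <
        ∑ x ∈ Finset.Ico ((p+1) * α ^ 2) (i * α ^ 2 + j + 1), sigmaKA h k α x)
    (htail : q < i →
      ∑ x ∈ Finset.Ico (i * α ^ 2) (i * α ^ 2 + j + 1), sigmaKA h k α x ≤
        sVal h k α q * (((k:ℚ) - i) * (α:ℚ)^2)) :
    q * α ^ 2 ≤ i * α ^ 2 + j ∧
    (∀ ℓ ≤ i * α ^ 2 + j,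
      onlineDensity (k * α ^ 2) (sigmaKA h k α) (i * α ^ 2 + j) ℓ ≤
        onlineDensity (k * α ^ 2) (sigmaKA h k α) (i * α ^ 2 + j) (q * α ^ 2)) ∧
    (∀ ℓ < q * α ^ 2,
      onlineDensity (k * α ^ 2) (sigmaKA h k α) (i * α ^ 2 + j) ℓ <
        onlineDensity (k * α ^ 2) (sigmaKA h k α) (i * α ^ 2 + j) (q * α ^ 2)) := by
  have hα1 : 1 ≤ α := by omega
  have hαq : (2:ℚ) ≤ (α:ℚ) := by exact_mod_cast hα
  have hα2pos : 0 < α ^ 2 := by positivity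
  set t := i * α ^ 2 + j with ht
  set d := k * α ^ 2 with hd
  set σ := sigmaKA h k α with hσ
  have hσnn : ∀ x, 0 ≤ σ x := fun x => le_of_lt (by
    rw [hσ, sigma_eq]; exact sVal_pos h k α _ hh hα1)
  set G : ℕ → ℚ := fun p => ∑ x ∈ Finset.Ico (p * α ^ 2) (t + 1), σ x with hG
  set A : ℕ → ℚ := fun p => ((k:ℚ) - p) * (α:ℚ)^2 with hA
  have hApos : ∀ p ≤ i, 0 < A p := by
    intro p hp
    have h1 : (p:ℚ) + 1 ≤ (k:ℚ) := by exact_mod_cast (by omega : p + 1 ≤ k)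
    have h2 : (0:ℚ) < (k:ℚ) - p := by linarith
    rw [hA]
    have h3 : (0:ℚ) < (α:ℚ)^2 := by positivity
    exact mul_pos h2 h3
  have htd : t + 1 ≤ d := by
    have h1 : (i+1) * α ^ 2 ≤ k * α ^ 2 := Nat.mul_le_mul_right _ (by omega)
    have h2 : (i+1) * α ^ 2 = i * α ^ 2 + α ^ 2 := by ring
    omega
  have hℓt : q * α ^ 2 ≤ t := by
    have : q * α ^ 2 ≤ i * α ^ 2 := Nat.mul_le_mul_right _ hqi
    omega
  have hDeval : ∀ ℓ, onlineDensity d σ t ℓ =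
      (∑ x ∈ Finset.Ico ℓ (t+1), σ x) / ((d:ℚ) - ℓ) := by
    intro ℓ
    unfold onlineDensity
    rw [Finset.Ico_add_one_right_eq_Icc]
  have hdq : ((d:ℕ):ℚ) = (k:ℚ) * (α:ℚ)^2 := by rw [hd]; push_cast; ring
  have htq : ((t:ℕ):ℚ) = (i:ℚ) * (α:ℚ)^2 + j := by rw [ht]; push_cast; ring
  have hFD : ∀ p, onlineDensity d σ t (p * α ^ 2) = G p / A p := by
    intro p
    have hden : ((d:ℕ):ℚ) - ((p * α ^ 2 : ℕ):ℚ) = A p := by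
      rw [hA, hdq]; push_cast; ring
    rw [hDeval, hden]
  have hDsplit : ∀ m ℓ, m * α ^ 2 ≤ ℓ → ℓ < (m+1) * α ^ 2 → m + 1 ≤ i →
      (∑ x ∈ Finset.Ico ℓ (t+1), σ x) =
        G (m+1) + (((m+1) * α ^ 2 - ℓ : ℕ):ℚ) * sVal h k α m := by
    intro m ℓ h1 h2 h3
    have hb : (m+1) * α ^ 2 ≤ t + 1 := by
      have : (m+1) * α ^ 2 ≤ i * α ^ 2 := Nat.mul_le_mul_right _ h3
      omega
    rw [← Finset.sum_Ico_consecutive σ (le_of_lt h2) hb]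
    rw [hσ, sigma_block h k α (by omega) h1 le_rfl]
    rw [hG]
    ring
  have hstrict' : ∀ p, p + 1 ≤ q → sVal h k α p * A (p+1) < G (p+1) := by
    intro p hp
    have hAe : A (p+1) = ((k:ℚ) - ((p:ℚ)+1)) * (α:ℚ)^2 := by rw [hA]; push_cast; ring
    have hGe : G (p+1) = ∑ x ∈ Finset.Ico ((p+1) * α ^ 2) (t + 1), σ x := rfl
    rw [hAe, hGe]
    exact hstrict p hp
  -- head: strictly below F q for ℓ < q α²
  have hhead : ∀ ℓ < q * α ^ 2, onlineDensity d σ t ℓ < G q / A q := by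
    intro ℓ hℓ
    have hm1 : ℓ / α ^ 2 * α ^ 2 ≤ ℓ := Nat.div_mul_le_self ℓ (α ^ 2)
    have hm2 : ℓ < (ℓ / α ^ 2 + 1) * α ^ 2 := by
      have h2 := Nat.mod_lt ℓ hα2pos
      calc ℓ = α ^ 2 * (ℓ / α ^ 2) + ℓ % α ^ 2 := (Nat.div_add_mod ℓ (α ^ 2)).symm
        _ < α ^ 2 * (ℓ / α ^ 2) + α ^ 2 := by omega
        _ = (ℓ / α ^ 2 + 1) * α ^ 2 := by ring
    obtain ⟨m, hm⟩ : ∃ m, ℓ / α ^ 2 = m := ⟨_, rfl⟩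
    rw [hm] at hm1 hm2
    have hmq : m < q := by
      by_contra hc
      push_neg at hc
      have : q * α ^ 2 ≤ m * α ^ 2 := Nat.mul_le_mul_right _ hc
      omega
    have hsplit := hDsplit m ℓ hm1 hm2 (by omega)
    have hn1 : 1 ≤ (m+1) * α ^ 2 - ℓ := by omega
    have hnq : (0:ℚ) < (((m+1) * α ^ 2 - ℓ : ℕ):ℚ) := by exact_mod_cast hn1
    have hdenom : ((d:ℕ):ℚ) - (ℓ:ℚ) = A (m+1) + (((m+1) * α ^ 2 - ℓ : ℕ):ℚ) := by
      rw [hA, hdq, Nat.cast_sub (le_of_lt hm2)]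
      push_cast
      ring
    have hstep1 : onlineDensity d σ t ℓ < G (m+1) / A (m+1) := by
      rw [hDeval, hsplit, hdenom]
      exact qaux2 _ _ _ _ (hApos (m+1) (by omega)) hnq (hstrict' m (by omega))
    have hchain : G (m+1) / A (m+1) ≤ G q / A q := by
      refine chain_le (fun p => G p / A p) (show m + 1 ≤ q by omega) ?_
      intro p hp1 hp2
      have hlt : p * α ^ 2 < (p+1) * α ^ 2 := by
        have : (p+1) * α ^ 2 = p * α ^ 2 + α ^ 2 := by ring
        omega
      have hGp : G p = G (p+1) + (((p+1) * α ^ 2 - p * α ^ 2 : ℕ):ℚ) * sVal h k α p :=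
        hDsplit p (p * α ^ 2) le_rfl hlt (by omega)
      have hsub : ((p+1) * α ^ 2 - p * α ^ 2 : ℕ) = α ^ 2 := by
        have : (p+1) * α ^ 2 = p * α ^ 2 + α ^ 2 := by ring
        omega
      have hAp : A p = A (p+1) + ((α ^ 2 : ℕ):ℚ) := by
        rw [hA]; push_cast; ring
      show G p / A p ≤ G (p+1) / A (p+1)
      rw [hGp, hsub, hAp]
      refine le_of_lt (qaux2 _ _ _ _ (hApos (p+1) (by omega)) ?_ (hstrict' p (by omega)))
      exact_mod_cast hα2pos
    linarith
  -- tail: at most F q for q α² ≤ ℓ ≤ t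
  have htailall : ∀ ℓ, q * α ^ 2 ≤ ℓ → ℓ ≤ t → onlineDensity d σ t ℓ ≤ G q / A q := by
    intro ℓ h1 h2
    have hGi : G i = ((j+1 : ℕ):ℚ) * sVal h k α i := by
      show (∑ x ∈ Finset.Ico (i * α ^ 2) (t+1), σ x) = _
      rw [hσ]
      rw [sigma_block h k α (by omega) le_rfl (by
        calc t + 1 ≤ i * α ^ 2 + α ^ 2 := by omega
          _ = (i+1) * α ^ 2 := by ring)]
      congr 2
      omega
    have hdℓpos : (0:ℚ) < ((d:ℕ):ℚ) - (ℓ:ℚ) := by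
      have h3 : (ℓ:ℚ) + 1 ≤ ((d:ℕ):ℚ) := by exact_mod_cast (by omega : ℓ + 1 ≤ d)
      linarith
    have hDi : i * α ^ 2 ≤ ℓ → onlineDensity d σ t ℓ ≤ G i / A i := by
      intro hbi
      have hsum : (∑ x ∈ Finset.Ico ℓ (t+1), σ x) = ((t + 1 - ℓ : ℕ):ℚ) * sVal h k α i := by
        rw [hσ]
        exact sigma_block h k α (by omega) hbi (by
          calc t + 1 ≤ i * α ^ 2 + α ^ 2 := by omega
            _ = (i+1) * α ^ 2 := by ring)
      have hFi : G i / A i =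
          (0 + ((j+1 : ℕ):ℚ) * sVal h k α i) / ((((d:ℕ):ℚ) - ((t:ℕ):ℚ) - 1) + ((j+1 : ℕ):ℚ)) := by
        rw [hGi, hA, hdq, htq]
        push_cast
        ring_nf
      have e1 : ((d:ℕ):ℚ) - (ℓ:ℚ) = (((d:ℕ):ℚ) - ((t:ℕ):ℚ) - 1) + ((t + 1 - ℓ : ℕ):ℚ) := by
        rw [Nat.cast_sub (by omega)]
        push_cast
        ring
      have e2 : (∑ x ∈ Finset.Ico ℓ (t+1), σ x) = 0 + ((t + 1 - ℓ : ℕ):ℚ) * sVal h k α i := by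
        rw [hsum]; ring
      rw [hDeval, e2, e1, hFi]
      apply qaux6
      · rw [← e1]; exact hdℓpos
      · exact_mod_cast (by omega : t + 1 - ℓ ≤ j + 1)
      · have hA0 : (0:ℚ) ≤ ((d:ℕ):ℚ) - ((t:ℕ):ℚ) - 1 := by
          have h4 : ((t:ℕ):ℚ) + 1 ≤ ((d:ℕ):ℚ) := by exact_mod_cast htd
          linarith
        have h5 := sVal_pos h k α i hh hα1
        nlinarith
    rcases Nat.eq_or_lt_of_le hqi with hqe | hql
    · rw [hqe]
      rw [hqe] at h1
      exact hDi h1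
    · -- q < i, hence i = q + 1
      have hiq1 : i = q + 1 := by omega
      have hS : G i ≤ sVal h k α q * A i := htail hql
      have hlt : q * α ^ 2 < (q+1) * α ^ 2 := by
        have : (q+1) * α ^ 2 = q * α ^ 2 + α ^ 2 := by ring
        omega
      have hGq : G q = G i + ((α ^ 2 : ℕ):ℚ) * sVal h k α q := by
        have hGp : G q = G (q+1) + (((q+1) * α ^ 2 - q * α ^ 2 : ℕ):ℚ) * sVal h k α q :=
          hDsplit q (q * α ^ 2) le_rfl hlt (by omega)
        have hsub : ((q+1) * α ^ 2 - q * α ^ 2 : ℕ) = α ^ 2 := by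
          have : (q+1) * α ^ 2 = q * α ^ 2 + α ^ 2 := by ring
          omega
        rw [hGp, hsub, ← hiq1]
      have hAq : A q = A i + ((α ^ 2 : ℕ):ℚ) := by
        rw [hA, hiq1]; push_cast; ring
      have hFiq : G i / A i ≤ G q / A q := by
        have h0 : G i / A i = (G i + 0 * sVal h k α q) / (A i + 0) := by
          rw [zero_mul, add_zero, add_zero]
        rw [h0, hGq, hAq]
        exact qaux6 (G i) (A i) (sVal h k α q) 0 ((α ^ 2 : ℕ):ℚ)
          (by simpa using hApos i (by omega)) (by positivity) hS
      by_cases hbi : i * α ^ 2 ≤ ℓ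
      · exact le_trans (hDi hbi) hFiq
      · -- ℓ in block q
        push_neg at hbi
        have hq1i : (q+1) * α ^ 2 = i * α ^ 2 := by rw [hiq1]
        have hℓlt : ℓ < (q+1) * α ^ 2 := by omega
        have hsplit := hDsplit q ℓ h1 hℓlt (by omega)
        have hdenom : ((d:ℕ):ℚ) - (ℓ:ℚ) = A (q+1) + (((q+1) * α ^ 2 - ℓ : ℕ):ℚ) := by
          rw [hA, hdq, Nat.cast_sub (le_of_lt hℓlt)]
          push_cast
          ring
        have hn2 : ((q+1) * α ^ 2 - ℓ : ℕ) ≤ α ^ 2 := by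
          have : (q+1) * α ^ 2 = q * α ^ 2 + α ^ 2 := by ring
          omega
        have hAi1 : A (q+1) = A i := by rw [hiq1]
        have hGi1 : G (q+1) = G i := by rw [hiq1]
        rw [hDeval, hsplit, hdenom, hAi1, hGi1]
        have hFq : G q / A q = (G i + ((α ^ 2 : ℕ):ℚ) * sVal h k α q) / (A i + ((α ^ 2 : ℕ):ℚ)) := by
          rw [hGq, hAq]
        rw [hFq]
        refine qaux6 (G i) (A i) (sVal h k α q) _ _ ?_ ?_ hS
        · rw [← hAi1, ← hdenom]; exact hdℓpos
        · exact_mod_cast hn2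
  refine ⟨hℓt, ?_, ?_⟩
  · intro ℓ hℓ
    rw [hFD q]
    by_cases hc : ℓ < q * α ^ 2
    · exact le_of_lt (hhead ℓ hc)
    · exact htailall ℓ (by omega) hℓ
  · intro ℓ hℓ
    rw [hFD q]
    exact hhead ℓ hℓ


/-- For the universal-deadline instance `(kα², σ*_{k,α})` with
`h ≥ 1`, `k ≥ 2`, `α ≥ 2`, and every time `t = iα² + j` (`0 ≤ i < k`, `0 ≤ j < α²`),
the left end `ℓ_σ(t)` of the defining interval (the smallest maximizer of the online
density) equals `0` if `i = 0`; `(i−1)α²` if `i > 0` and `j < α`; and `iα²` if `i > 0`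
and `α ≤ j < α²`. -/
theorem adversary_defining_intervals (h k α : ℕ) (hh : 1 ≤ h) (hk : 2 ≤ k) (hα : 2 ≤ α)
    (i j : ℕ) (hi : i < k) (hj : j < α ^ 2) :
    (if i = 0 then 0 else if j < α then (i - 1) * α ^ 2 else i * α ^ 2) ≤ i * α ^ 2 + j ∧
    (∀ ℓ ≤ i * α ^ 2 + j,
      onlineDensity (k * α ^ 2) (sigmaKA h k α) (i * α ^ 2 + j) ℓ ≤
        onlineDensity (k * α ^ 2) (sigmaKA h k α) (i * α ^ 2 + j)
          (if i = 0 then 0 else if j < α then (i - 1) * α ^ 2 else i * α ^ 2)) ∧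
    (∀ ℓ < (if i = 0 then 0 else if j < α then (i - 1) * α ^ 2 else i * α ^ 2),
      onlineDensity (k * α ^ 2) (sigmaKA h k α) (i * α ^ 2 + j) ℓ <
        onlineDensity (k * α ^ 2) (sigmaKA h k α) (i * α ^ 2 + j)
          (if i = 0 then 0 else if j < α then (i - 1) * α ^ 2 else i * α ^ 2)) := by
  by_cases hi0 : i = 0
  · subst hi0
    simp only [if_pos]
    have := master h k α 0 j 0 hh hα hi hj le_rfl (by omega)
      (fun p hp => absurd hp (by omega)) (fun hc => absurd hc (by omega))
    simpa using this
  · by_cases hjα : j < α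
    · simp only [if_neg hi0, if_pos hjα]
      exact master h k α i j (i-1) hh hα hi hj (by omega) (by omega)
        (fun p hp => key_strict h k α i j hh hα hi hj p (by omega) (Or.inl (by omega)))
        (fun _ => key_tail h k α i j hh hα hi hj (by omega) hjα)
    · simp only [if_neg hi0, if_neg hjα]
      exact master h k α i j i hh hα hi hj le_rfl (by omega)
        (fun p hp => key_strict h k α i j hh hα hi hj p hp (Or.inr (by omega)))
        (fun hc => absurd hc (by omega))
end

section
/- Let h be a positive integer and consider the universal-deadline instance (150, σ) with σ(25i+j) = h·5^i·5!/(5−i)! for 0 ≤ i < 6 and 0 ≤ j < 25 (this is the instance σ*_{k,α} with k = 6, α = 5). Then Σ_{t=0}^{149} (209/100)·ϱ̂_σ(t) < Σ_{t=0}^{149} σ(t). Consequently, no feasible schedule of the corresponding set of unit jobs (σ(t) jobs arriving at time t, all with deadline 150) can execute at most (209/100)·ϱ̂_σ(t) jobs at every time t; hence any feasible online algorithm for machine-minimizing scheduling of unit jobs has competitive factor at least 2.09, even when all jobs share a universal deadline. -/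
/-- The adversary arrival sequence with `k = 6`, `α = 5`, universal deadline `150`:
`σ(25i + j) = h·5^i·5!/(5−i)!` for `0 ≤ i < 6`, `0 ≤ j < 25` (natural-number job
counts). -/
def sigmaAdv (h : ℕ) : ℕ → ℕ := fun t =>
  h * 5 ^ (t / 25) * (Nat.factorial 5 / Nat.factorial (5 - t / 25))

/-- The maximum online density at time `t` for the instance `(150, sigmaAdv h)`. -/
def maxDensityAdv (h t : ℕ) : ℚ :=
  (Finset.range (t + 1)).sup' Finset.nonempty_range_add_one
    (fun ℓ => (∑ i ∈ Finset.Icc ℓ t, (sigmaAdv h i : ℚ)) / ((150 : ℚ) - (ℓ : ℚ)))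

/-- Closed-form cumulative block values for `sigmaAdv 1`. -/
def cAdv : ℕ → ℕ := fun i => match i with
  | 0 => 0 | 1 => 25 | 2 => 650 | 3 => 13150 | 4 => 200650 | 5 => 2075650
  | _ => 11450650

/-- Closed form for `∑_{i<n} sigmaAdv 1 i` (valid for `n ≤ 150`). -/
def cumC (n : ℕ) : ℕ :=
  cAdv (n / 25) + (n % 25) * (5 ^ (n / 25) * (120 / Nat.factorial (5 - n / 25)))

/-- `1500` times the maximum density at time `t` (for `h = 1`). -/
def NbC (t : ℕ) : ℕ :=
  (1500 * (cumC (t + 1) - cumC (25 * ((t - 5) / 25)))) / (150 - 25 * ((t - 5) / 25))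

set_option maxRecDepth 100000 in
set_option maxHeartbeats 1000000 in
lemma cum_step : ∀ n ∈ Finset.range 150, cumC (n + 1) = cumC n + sigmaAdv 1 n := by
  decide

set_option maxRecDepth 100000 in
set_option maxHeartbeats 4000000 in
lemma factA : ∀ t ∈ Finset.range 150, ∀ ℓ ∈ Finset.range (t + 1),
    1500 * (cumC (t + 1) - cumC ℓ) ≤ NbC t * (150 - ℓ) := by decide

set_option maxRecDepth 100000 in
set_option maxHeartbeats 1000000 in
lemma factB : 209 * ∑ t ∈ Finset.range 150, NbC t < 150000 * cumC 150 := by decide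

lemma sigma_scale (h t : ℕ) : sigmaAdv h t = h * sigmaAdv 1 t := by
  unfold sigmaAdv; ring

lemma sum_eq : ∀ n, n ≤ 150 → ∑ i ∈ Finset.range n, sigmaAdv 1 i = cumC n := by
  intro n
  induction n with
  | zero => intro _; simp [cumC, cAdv]
  | succ n ih =>
      intro hn
      rw [Finset.sum_range_succ, ih (by omega),
        cum_step n (Finset.mem_range.2 (by omega))]

lemma cum_mono {a b : ℕ} (hab : a ≤ b) (hb : b ≤ 150) : cumC a ≤ cumC b := by
  rw [← sum_eq a (le_trans hab hb), ← sum_eq b hb]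
  exact Finset.sum_le_sum_of_subset (Finset.range_subset_range.2 hab)

lemma sum_sigma_cast (h n : ℕ) (hn : n ≤ 150) :
    ∑ i ∈ Finset.range n, (sigmaAdv h i : ℚ) = (h : ℚ) * (cumC n : ℚ) := by
  have : ∑ i ∈ Finset.range n, sigmaAdv h i = h * cumC n := by
    rw [← sum_eq n hn, Finset.mul_sum]
    exact Finset.sum_congr rfl fun i _ => sigma_scale h i
  calc ∑ i ∈ Finset.range n, (sigmaAdv h i : ℚ)
      = ((∑ i ∈ Finset.range n, sigmaAdv h i : ℕ) : ℚ) := by push_cast; ring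
    _ = (h : ℚ) * (cumC n : ℚ) := by rw [this]; push_cast; ring

lemma density_le (h t : ℕ) (ht : t < 150) :
    maxDensityAdv h t ≤ (h : ℚ) * (NbC t : ℚ) / 1500 := by
  apply Finset.sup'_le
  intro ℓ hℓ
  have hℓt : ℓ ≤ t := Nat.lt_succ_iff.1 (Finset.mem_range.1 hℓ)
  have hden : (0 : ℚ) < 150 - (ℓ : ℚ) := by
    have : (ℓ : ℚ) < 150 := by exact_mod_cast lt_of_le_of_lt hℓt ht
    linarith
  rw [div_le_iff₀ hden]
  -- rewrite the Icc sum as a difference of range sums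
  have hsum : ∑ i ∈ Finset.Icc ℓ t, (sigmaAdv h i : ℚ)
      = (h : ℚ) * ((cumC (t + 1) - cumC ℓ : ℕ) : ℚ) := by
    have h1 : Finset.Icc ℓ t = Finset.Ico ℓ (t + 1) := (Finset.Ico_add_one_right_eq_Icc ℓ t).symm
    rw [h1, Finset.sum_Ico_eq_sub _ (by omega),
      sum_sigma_cast h (t + 1) (by omega), sum_sigma_cast h ℓ (by omega)]
    have hm : cumC ℓ ≤ cumC (t + 1) := cum_mono (by omega) (by omega)
    push_cast [Nat.cast_sub hm]
    ring
  rw [hsum]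
  have hA := factA t (Finset.mem_range.2 ht) ℓ hℓ
  have hAq : (1500 : ℚ) * ((cumC (t + 1) - cumC ℓ : ℕ) : ℚ)
      ≤ (NbC t : ℚ) * ((150 - ℓ : ℕ) : ℚ) := by exact_mod_cast hA
  have hsub : ((150 - ℓ : ℕ) : ℚ) = 150 - (ℓ : ℚ) := by
    have : ℓ ≤ 150 := by omega
    push_cast [Nat.cast_sub this]; ring
  rw [hsub] at hAq
  have hh0 : (0 : ℚ) ≤ (h : ℚ) := by positivity
  calc (h : ℚ) * ((cumC (t + 1) - cumC ℓ : ℕ) : ℚ)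
      ≤ (h : ℚ) * ((NbC t : ℚ) * (150 - (ℓ : ℚ)) / 1500) := by
        apply mul_le_mul_of_nonneg_left _ hh0
        linarith
    _ = (h : ℚ) * (NbC t : ℚ) / 1500 * (150 - (ℓ : ℚ)) := by ring

lemma part1 (h : ℕ) (hh : 1 ≤ h) :
    ∑ t ∈ Finset.range 150, (209 / 100 : ℚ) * maxDensityAdv h t <
      ∑ t ∈ Finset.range 150, (sigmaAdv h t : ℚ) := by
  have hbound : ∑ t ∈ Finset.range 150, (209 / 100 : ℚ) * maxDensityAdv h t
      ≤ ∑ t ∈ Finset.range 150, (209 / 100 : ℚ) * ((h : ℚ) * (NbC t : ℚ) / 1500) := by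
    apply Finset.sum_le_sum
    intro t htm
    have := density_le h t (Finset.mem_range.1 htm)
    nlinarith
  have hS : ∑ t ∈ Finset.range 150, (209 / 100 : ℚ) * ((h : ℚ) * (NbC t : ℚ) / 1500)
      = (209 : ℚ) * (h : ℚ) * ((∑ t ∈ Finset.range 150, NbC t : ℕ) : ℚ) / 150000 := by
    rw [Nat.cast_sum, Finset.mul_sum, Finset.sum_div]
    exact Finset.sum_congr rfl fun t _ => by ring
  have hRHS : ∑ t ∈ Finset.range 150, (sigmaAdv h t : ℚ) = (h : ℚ) * (cumC 150 : ℚ) :=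
    sum_sigma_cast h 150 le_rfl
  rw [hRHS]
  refine lt_of_le_of_lt (hbound.trans hS.le) ?_
  have hB : (209 : ℚ) * ((∑ t ∈ Finset.range 150, NbC t : ℕ) : ℚ)
      < 150000 * ((cumC 150 : ℕ) : ℚ) := by exact_mod_cast factB
  have hh1 : (1 : ℚ) ≤ (h : ℚ) := by exact_mod_cast hh
  have hpos : (0 : ℚ) < (h : ℚ) := by linarith
  rw [div_lt_iff₀ (by norm_num : (0 : ℚ) < 150000)]
  have := mul_lt_mul_of_pos_left hB hpos
  linarith

/-- For the instance `(150, σ)` with `σ(25i+j) = h·5^i·5!/(5−i)!`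
(`h ≥ 1`): `Σ_{t<150} (209/100)·ϱ̂_σ(t) < Σ_{t<150} σ(t)`; consequently no feasible
schedule of the corresponding unit jobs (`σ(t)` jobs arriving at time `t`, all with
deadline `150`) starts at most `(209/100)·ϱ̂_σ(t)` jobs at every time `t` — so any
feasible online algorithm has competitive factor at least `2.09`, even with a
universal deadline. -/
theorem lower_bound_209 (h : ℕ) (hh : 1 ≤ h) :
    (∑ t ∈ Finset.range 150, (209 / 100 : ℚ) * maxDensityAdv h t <
      ∑ t ∈ Finset.range 150, (sigmaAdv h t : ℚ)) ∧
    ¬ ∃ s : ((t : Fin 150) × Fin (sigmaAdv h t)) → ℕ,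
        (∀ j, (j.1 : ℕ) ≤ s j ∧ s j < 150) ∧
        ∀ t : ℕ, t < 150 →
          ((Finset.univ.filter fun j => s j = t).card : ℚ) ≤
            (209 / 100 : ℚ) * maxDensityAdv h t := by
  refine ⟨part1 h hh, ?_⟩
  rintro ⟨s, hs, hcard⟩
  have hpart : (Finset.univ : Finset ((t : Fin 150) × Fin (sigmaAdv h t))).card
      = ∑ t ∈ Finset.range 150,
          ((Finset.univ : Finset ((t : Fin 150) × Fin (sigmaAdv h t))).filter
            fun j => s j = t).card :=
    Finset.card_eq_sum_card_fiberwise (fun x _ => Finset.mem_range.2 (hs x).2)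
  have htotal : ((Finset.univ : Finset ((t : Fin 150) × Fin (sigmaAdv h t))).card : ℚ)
      = ∑ t ∈ Finset.range 150, (sigmaAdv h t : ℚ) := by
    rw [Finset.card_univ]
    have h1 : Fintype.card ((t : Fin 150) × Fin (sigmaAdv h t))
        = ∑ t : Fin 150, sigmaAdv h (t : ℕ) := by
      rw [Fintype.card_sigma]
      simp
    rw [h1]
    rw [Fin.sum_univ_eq_sum_range (fun t => sigmaAdv h t) 150]
    push_cast
    ring
  have hle : ((Finset.univ : Finset ((t : Fin 150) × Fin (sigmaAdv h t))).card : ℚ)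
      ≤ ∑ t ∈ Finset.range 150, (209 / 100 : ℚ) * maxDensityAdv h t := by
    rw [hpart]
    push_cast
    exact Finset.sum_le_sum fun t htm => hcard t (Finset.mem_range.1 htm)
  have := part1 h hh
  rw [← htotal] at this
  exact absurd (lt_of_le_of_lt hle this) (lt_irrefl _)
end

section
/- Let J be a finite set of unit jobs, let c ≥ 0, and let d ≥ 1. Define J_d = {(a_j, d) : j ∈ J, d_j ≤ d}, i.e., every job of J with deadline at most d has its deadline replaced by d, and all other jobs are discarded. Then for every t with 0 ≤ t < d, Φ_c(J_d, t, d) ≤ Φ_c(J, t, d). (In particular, ϱ̂(J_d(t')) ≤ ϱ̂(J(t')) for every t', while J_d(t,d) = J(t,d).) -/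
/-- `J(ℓ,r)`: the number of jobs arriving at or after `ℓ` with deadline at most `r`. -/
def jobCount {ι : Type*} [Fintype ι] (a dl : ι → ℕ) (ℓ r : ℕ) : ℕ :=
  (Finset.univ.filter fun j => ℓ ≤ a j ∧ dl j ≤ r).card

/-- `ϱ̂(J(t))`: the maximum density `max_{0≤ℓ<r} (J(t))(ℓ,r)/(r−ℓ)` of the sub-instance
of jobs arrived by time `t` (as a real supremum, which is attained). -/
noncomputable def rhoHatUpTo {ι : Type*} [Fintype ι] (a dl : ι → ℕ) (t : ℕ) : ℝ :=
  sSup {x : ℝ | ∃ ℓ r : ℕ, ℓ < r ∧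
    x = ((Finset.univ.filter fun j => a j ≤ t ∧ ℓ ≤ a j ∧ dl j ≤ r).card : ℝ) /
          ((r : ℝ) - (ℓ : ℝ))}

/-- The potential `Φ_c(J, t₁, t₂) = (Σ_{t₁≤t<t₂} c·ϱ̂(J(t))) − J(t₁,t₂)`. -/
noncomputable def Phi {ι : Type*} [Fintype ι] (a dl : ι → ℕ) (c : ℝ) (t₁ t₂ : ℕ) : ℝ :=
  (∑ t ∈ Finset.Ico t₁ t₂, c * rhoHatUpTo a dl t) - (jobCount a dl t₁ t₂ : ℝ)

lemma rhoSet_bddAbove {ι : Type*} [Fintype ι] (a dl : ι → ℕ) (t : ℕ) :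
    BddAbove {x : ℝ | ∃ ℓ r : ℕ, ℓ < r ∧
      x = ((Finset.univ.filter fun j => a j ≤ t ∧ ℓ ≤ a j ∧ dl j ≤ r).card : ℝ) /
            ((r : ℝ) - (ℓ : ℝ))} := by
  refine ⟨(Fintype.card ι : ℝ), ?_⟩
  rintro x ⟨ℓ, r, hlr, rfl⟩
  have h1 : (1 : ℝ) ≤ (r : ℝ) - ℓ := by
    have : (ℓ : ℝ) + 1 ≤ r := by exact_mod_cast hlr
    linarith
  have hcard : ((Finset.univ.filter fun j => a j ≤ t ∧ ℓ ≤ a j ∧ dl j ≤ r).card : ℝ)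
      ≤ Fintype.card ι := by
    have := Finset.card_filter_le (Finset.univ : Finset ι)
      (fun j => a j ≤ t ∧ ℓ ≤ a j ∧ dl j ≤ r)
    simpa using (Nat.cast_le (α := ℝ)).2 this
  calc ((Finset.univ.filter fun j => a j ≤ t ∧ ℓ ≤ a j ∧ dl j ≤ r).card : ℝ) / ((r : ℝ) - ℓ)
      ≤ ((Finset.univ.filter fun j => a j ≤ t ∧ ℓ ≤ a j ∧ dl j ≤ r).card : ℝ) :=
        div_le_self (by positivity) h1
    _ ≤ _ := hcard

lemma rhoHat_nonneg {ι : Type*} [Fintype ι] (a dl : ι → ℕ) (t : ℕ) :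
    0 ≤ rhoHatUpTo a dl t := by
  have hmem : ((Finset.univ.filter fun j => a j ≤ t ∧ 0 ≤ a j ∧ dl j ≤ 1).card : ℝ) /
      ((1 : ℝ) - (0 : ℝ)) ∈ {x : ℝ | ∃ ℓ r : ℕ, ℓ < r ∧
      x = ((Finset.univ.filter fun j => a j ≤ t ∧ ℓ ≤ a j ∧ dl j ≤ r).card : ℝ) /
            ((r : ℝ) - (ℓ : ℝ))} := ⟨0, 1, by norm_num, by norm_num⟩
  have := le_csSup (rhoSet_bddAbove a dl t) hmem
  refine le_trans ?_ this
  positivity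

lemma rho_le {ι : Type*} [Fintype ι] (a dl : ι → ℕ) (d t : ℕ) :
    rhoHatUpTo (fun j : {j : ι // dl j ≤ d} => a j.1) (fun _ => d) t ≤ rhoHatUpTo a dl t := by
  apply Real.sSup_le _ (rhoHat_nonneg a dl t)
  rintro x ⟨ℓ, r, hlr, rfl⟩
  by_cases hr : d ≤ r
  · -- counts: subtype count ≤ count with dl ≤ r
    have hcard : (Finset.univ.filter fun j : {j : ι // dl j ≤ d} =>
          a j.1 ≤ t ∧ ℓ ≤ a j.1 ∧ d ≤ r).card
        ≤ (Finset.univ.filter fun j : ι => a j ≤ t ∧ ℓ ≤ a j ∧ dl j ≤ r).card := by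
      apply Finset.card_le_card_of_injOn (fun j => j.1)
      · intro j hj
        simp only [Finset.mem_coe, Finset.mem_filter, Finset.mem_univ, true_and] at hj ⊢
        exact ⟨hj.1, hj.2.1, le_trans j.2 hr⟩
      · intro x _ y _ h
        exact Subtype.ext h
    have h1 : (0 : ℝ) < (r : ℝ) - ℓ := by
      have : (ℓ : ℝ) + 1 ≤ r := by exact_mod_cast hlr
      linarith
    have hx : ((Finset.univ.filter fun j : {j : ι // dl j ≤ d} =>
          a j.1 ≤ t ∧ ℓ ≤ a j.1 ∧ d ≤ r).card : ℝ) / ((r : ℝ) - ℓ)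
        ≤ ((Finset.univ.filter fun j : ι => a j ≤ t ∧ ℓ ≤ a j ∧ dl j ≤ r).card : ℝ) /
          ((r : ℝ) - ℓ) := by
      gcongr
    refine le_trans hx (le_csSup (rhoSet_bddAbove a dl t) ?_)
    exact ⟨ℓ, r, hlr, rfl⟩
  · have : (Finset.univ.filter fun j : {j : ι // dl j ≤ d} =>
        a j.1 ≤ t ∧ ℓ ≤ a j.1 ∧ d ≤ r) = ∅ := by
      apply Finset.filter_false_of_mem
      intro j _
      exact fun h => hr h.2.2
    rw [this]
    simpa using rhoHat_nonneg a dl t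

/-- **reduction to equal deadlines.**  Let `J` be a finite set of unit
jobs, `c ≥ 0`, `d ≥ 1`, and let `J_d` be obtained by keeping exactly the jobs with
deadline at most `d` and replacing their deadlines by `d`.  Then for every `t < d`,
`Φ_c(J_d, t, d) ≤ Φ_c(J, t, d)`. -/
theorem reduction_equal_deadlines {ι : Type*} [Fintype ι]
    (a dl : ι → ℕ) (hjob : ∀ j, a j < dl j)
    (c : ℝ) (hc : 0 ≤ c) (d : ℕ) (hd : 1 ≤ d) (t : ℕ) (ht : t < d) :
    Phi (fun j : {j : ι // dl j ≤ d} => a j.1) (fun _ => d) c t d ≤ Phi a dl c t d := by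
  unfold Phi
  have hcount : jobCount (fun j : {j : ι // dl j ≤ d} => a j.1) (fun _ => d) t d
      = jobCount a dl t d := by
    unfold jobCount
    apply Finset.card_bij (fun (j : {j : ι // dl j ≤ d}) _ => j.1)
    · intro j hj
      simp only [Finset.mem_filter, Finset.mem_univ, true_and] at hj ⊢
      exact ⟨hj.1, j.2⟩
    · intro x _ y _ h; exact Subtype.ext h
    · intro j hj
      simp only [Finset.mem_filter, Finset.mem_univ, true_and] at hj
      exact ⟨⟨j, hj.2⟩, by simp [hj.1], rfl⟩
  rw [hcount]
  apply sub_le_sub_right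
  apply Finset.sum_le_sum
  intro t' _
  exact mul_le_mul_of_nonneg_left (rho_le a dl d t') hc
end

section
/- Let (d,σ) be a universal-deadline instance with σ taking nonnegative rational values, and suppose σ is not non-decreasing. Let k be the largest index with 0 ≤ k < d−1 and σ(k) > σ(k+1), and let m with k < m < d satisfy σ(m) < (Σ_{i=k}^{m} σ(i))/(m−k+1) and, if m < d−1, σ(m+1) ≥ (Σ_{i=k}^{m+1} σ(i))/(m−k+2). Define σ' by σ'(i) = σ(i) for i < k or i > m, and σ'(i) = (Σ_{j=k}^{m} σ(j))/(m−k+1) for k ≤ i ≤ m. Then for every c ≥ 0, Φ_c(σ') ≤ Φ_c(σ). -/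
/-- The maximum online density at time `t` of the universal-deadline instance `(d, σ)`:
`ϱ̂_σ(t) = max_{0≤ℓ≤t} (Σ_{i=ℓ}^{t} σ(i)) / (d − ℓ)`. -/
def maxOnlineDensity (d : ℕ) (σ : ℕ → ℚ) (t : ℕ) : ℚ :=
  (Finset.range (t + 1)).sup' Finset.nonempty_range_add_one
    (fun ℓ => (∑ i ∈ Finset.Icc ℓ t, σ i) / ((d : ℚ) - (ℓ : ℚ)))

/-- The potential `Φ_c(σ) = Σ_{t=0}^{d−1} c·ϱ̂_σ(t) − Σ_{t=0}^{d−1} σ(t)`. -/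
def PhiU (d : ℕ) (c : ℚ) (σ : ℕ → ℚ) : ℚ :=
  (∑ t ∈ Finset.range d, c * maxOnlineDensity d σ t) - ∑ t ∈ Finset.range d, σ t

private lemma mono_aux (σ : ℕ → ℚ) (d k : ℕ)
    (h : ∀ i, k < i → i < d - 1 → σ i ≤ σ (i + 1)) :
    ∀ a b, k < a → a ≤ b → b < d → σ a ≤ σ b := by
  intro a b ha hab hbd
  induction b, hab using Nat.le_induction with
  | base => exact le_rfl
  | succ n hn ih =>
    exact le_trans (ih (by omega)) (h n (by omega) (by omega))

private lemma splitIcc (f : ℕ → ℚ) (a b c : ℕ) (h1 : a ≤ b) (h2 : b ≤ c + 1) :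
    ∑ i ∈ Finset.Icc a c, f i
      = (∑ i ∈ Finset.Ico a b, f i) + ∑ i ∈ Finset.Icc b c, f i := by
  rw [← Finset.Ico_add_one_right_eq_Icc, ← Finset.Ico_add_one_right_eq_Icc,
    Finset.sum_Ico_consecutive f h1 h2]

set_option maxHeartbeats 1000000 in
/-- **reduction to non-decreasing sequences.**  Let `(d, σ)` be a
universal-deadline instance, `k < d−1` the largest index with `σ(k) > σ(k+1)`, and
`k < m < d` with `σ(m)` below the average of `σ(k),…,σ(m)` and (if `m < d−1`)
`σ(m+1)` at least the average of `σ(k),…,σ(m+1)`.  Replacing the block `σ(k),…,σ(m)`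
by its average does not increase the potential: `Φ_c(σ') ≤ Φ_c(σ)` for every `c ≥ 0`. -/
theorem reduction_non_decreasing (d : ℕ) (σ : ℕ → ℚ) (hσ : ∀ i, 0 ≤ σ i)
    (k m : ℕ) (hk : k < d - 1) (hdec : σ (k + 1) < σ k)
    (hklargest : ∀ i, k < i → i < d - 1 → σ i ≤ σ (i + 1))
    (hkm : k < m) (hmd : m < d)
    (hm : σ m < (∑ i ∈ Finset.Icc k m, σ i) / ((m : ℚ) - (k : ℚ) + 1))
    (hm' : m < d - 1 →
      (∑ i ∈ Finset.Icc k (m + 1), σ i) / ((m : ℚ) - (k : ℚ) + 2) ≤ σ (m + 1))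
    (c : ℚ) (hc : 0 ≤ c) :
    PhiU d c (fun i => if k ≤ i ∧ i ≤ m then
        (∑ j ∈ Finset.Icc k m, σ j) / ((m : ℚ) - (k : ℚ) + 1) else σ i) ≤
      PhiU d c σ := by
  set S := ∑ j ∈ Finset.Icc k m, σ j with hS
  set A := S / ((m : ℚ) - (k : ℚ) + 1) with hA
  set σ' := fun i => if k ≤ i ∧ i ≤ m then A else σ i with hσ'def
  have hkQ : (k : ℚ) < m := by exact_mod_cast hkm
  have hQ : (0 : ℚ) < (m : ℚ) - (k : ℚ) + 1 := by linarith
  have hS0 : 0 ≤ S := Finset.sum_nonneg fun i _ => hσ i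
  have hA0 : 0 ≤ A := div_nonneg hS0 hQ.le
  have hSA : S = A * ((m : ℚ) - (k : ℚ) + 1) := (div_mul_cancel₀ S hQ.ne').symm
  have hmono : ∀ j, k < j → j ≤ m → σ j ≤ σ m := fun j h1 h2 =>
    mono_aux σ d k hklargest j m h1 h2 hmd
  have hmA : ((m : ℚ) - (k : ℚ) + 1) * σ m ≤ S := by
    have := (lt_div_iff₀ hQ).mp hm
    linarith
  -- the block-average lemma
  have havg : ∀ r t, t + r = m → k ≤ t →
      ((t : ℚ) - (k : ℚ) + 1) * S
        ≤ ((m : ℚ) - (k : ℚ) + 1) * ∑ i ∈ Finset.Icc k t, σ i := by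
    intro r
    induction r with
    | zero =>
      intro t ht hkt
      have : t = m := by omega
      subst this
      rw [← hS, mul_comm]
    | succ r ih =>
      intro t ht hkt
      have h1 := ih (t + 1) (by omega) (by omega)
      rw [Finset.sum_Icc_succ_top (by omega) σ] at h1
      have h2 : σ (t + 1) ≤ σ m := hmono (t + 1) (by omega) (by omega)
      have h3 : ((m : ℚ) - (k : ℚ) + 1) * σ (t + 1)
          ≤ ((m : ℚ) - (k : ℚ) + 1) * σ m := by
        exact mul_le_mul_of_nonneg_left h2 hQ.le
      push_cast at h1
      linarith
  have hblock : ∀ t, k ≤ t → t ≤ m →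
      ((t : ℚ) - (k : ℚ) + 1) * A ≤ ∑ i ∈ Finset.Icc k t, σ i := by
    intro t h1 h2
    have h := havg (m - t) t (by omega) h1
    rw [hA, ← mul_div_assoc, div_le_iff₀ hQ]
    linarith
  have hsame : ∀ i, (i < k ∨ m < i) → σ' i = σ i := by
    intro i hi
    simp only [hσ'def]
    exact if_neg (by omega)
  have hconst : ∀ a b, k ≤ a → b ≤ m → a ≤ b →
      ∑ i ∈ Finset.Icc a b, σ' i = ((b : ℚ) - (a : ℚ) + 1) * A := by
    intro a b hka hbm hab
    have h1 : ∀ i ∈ Finset.Icc a b, σ' i = A := by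
      intro i hi
      rw [Finset.mem_Icc] at hi
      simp only [hσ'def]
      exact if_pos (by omega)
    rw [Finset.sum_congr rfl h1, Finset.sum_const, Nat.card_Icc, nsmul_eq_mul]
    rw [Nat.cast_sub (by omega)]
    push_cast
    ring
  -- pointwise comparison of maximum online densities
  have hdens : ∀ t, t < d → maxOnlineDensity d σ' t ≤ maxOnlineDensity d σ t := by
    intro t htd
    unfold maxOnlineDensity
    apply Finset.sup'_le
    intro ℓ hℓ
    rw [Finset.mem_range] at hℓ
    have hℓt : ℓ ≤ t := by omega
    have hwit : ∀ w, w ≤ t → ∀ x : ℚ,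
        x ≤ (∑ i ∈ Finset.Icc w t, σ i) / ((d : ℚ) - (w : ℚ)) →
        x ≤ (Finset.range (t + 1)).sup' Finset.nonempty_range_add_one
          (fun ℓ => (∑ i ∈ Finset.Icc ℓ t, σ i) / ((d : ℚ) - (ℓ : ℚ))) := by
      intro w hw x hx
      exact le_trans hx (Finset.le_sup'
        (fun ℓ => (∑ i ∈ Finset.Icc ℓ t, σ i) / ((d : ℚ) - (ℓ : ℚ)))
        (Finset.mem_range.mpr (by omega)))
    have hdl : (0 : ℚ) < (d : ℚ) - (ℓ : ℚ) := by
      have : (ℓ : ℚ) < d := by exact_mod_cast lt_of_le_of_lt hℓt htd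
      linarith
    by_cases htk : t < k
    · refine hwit ℓ hℓt _ (le_of_eq ?_)
      congr 1
      exact Finset.sum_congr rfl fun i hi => by
        rw [Finset.mem_Icc] at hi; exact hsame i (by omega)
    · push_neg at htk
      by_cases htm : t ≤ m
      · -- case B : k ≤ t ≤ m
        by_cases hℓk : ℓ ≤ k
        · refine hwit ℓ hℓt _ ?_
          have hnum : ∑ i ∈ Finset.Icc ℓ t, σ' i ≤ ∑ i ∈ Finset.Icc ℓ t, σ i := by
            rw [splitIcc σ' ℓ k t hℓk (by omega), splitIcc σ ℓ k t hℓk (by omega)]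
            have e1 : ∑ i ∈ Finset.Ico ℓ k, σ' i = ∑ i ∈ Finset.Ico ℓ k, σ i :=
              Finset.sum_congr rfl fun i hi => by
                rw [Finset.mem_Ico] at hi; exact hsame i (by omega)
            rw [e1, hconst k t le_rfl htm htk]
            have := hblock t htk htm
            linarith
          exact div_le_div_of_nonneg_right hnum hdl.le
        · push_neg at hℓk
          refine hwit k (by omega) _ ?_
          rw [hconst ℓ t (by omega) htm hℓt]
          have hdk : (0 : ℚ) < (d : ℚ) - (k : ℚ) := by
            have : (k : ℚ) < d := by exact_mod_cast lt_of_le_of_lt htk htd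
            linarith
          have hcast1 : (k : ℚ) < (ℓ : ℚ) := by exact_mod_cast hℓk
          have hcast2 : (t : ℚ) + 1 ≤ (d : ℚ) := by exact_mod_cast htd
          have h1 : ((t : ℚ) - (ℓ : ℚ) + 1) * A / ((d : ℚ) - (ℓ : ℚ))
              ≤ ((t : ℚ) - (k : ℚ) + 1) * A / ((d : ℚ) - (k : ℚ)) := by
            rw [div_le_div_iff₀ hdl hdk]
            have hp : (0:ℚ) ≤ A * (((ℓ:ℚ) - k) * ((d:ℚ) - ((t:ℚ)+1))) :=
              mul_nonneg hA0 (mul_nonneg (by linarith) (by linarith))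
            have key : ((t:ℚ) - (k:ℚ) + 1) * A * ((d:ℚ) - (ℓ:ℚ))
                - ((t:ℚ) - (ℓ:ℚ) + 1) * A * ((d:ℚ) - (k:ℚ))
                = A * (((ℓ:ℚ) - k) * ((d:ℚ) - ((t:ℚ)+1))) := by ring
            linarith
          have h2 : ((t : ℚ) - (k : ℚ) + 1) * A / ((d : ℚ) - (k : ℚ))
              ≤ (∑ i ∈ Finset.Icc k t, σ i) / ((d : ℚ) - (k : ℚ)) :=
            div_le_div_of_nonneg_right (hblock t htk htm) hdk.le
          linarith
      · push_neg at htm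
        by_cases hℓm : m < ℓ
        · refine hwit ℓ hℓt _ (le_of_eq ?_)
          congr 1
          exact Finset.sum_congr rfl fun i hi => by
            rw [Finset.mem_Icc] at hi; exact hsame i (by omega)
        · push_neg at hℓm
          set T := ∑ i ∈ Finset.Icc (m + 1) t, σ i with hT
          have hT0 : 0 ≤ T := Finset.sum_nonneg fun i _ => hσ i
          have hTsame : ∑ i ∈ Finset.Icc (m + 1) t, σ' i = T :=
            Finset.sum_congr rfl fun i hi => by
              rw [Finset.mem_Icc] at hi; exact hsame i (by omega)
          have hσkt : ∑ i ∈ Finset.Icc k t, σ i = S + T := by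
            rw [splitIcc σ k (m + 1) t (by omega) (by omega),
              Finset.Ico_add_one_right_eq_Icc, ← hS, ← hT]
          by_cases hℓk : ℓ ≤ k
          · refine hwit ℓ hℓt _ (le_of_eq ?_)
            congr 1
            rw [splitIcc σ' ℓ k t hℓk (by omega), splitIcc σ ℓ k t hℓk (by omega)]
            have e1 : ∑ i ∈ Finset.Ico ℓ k, σ' i = ∑ i ∈ Finset.Ico ℓ k, σ i :=
              Finset.sum_congr rfl fun i hi => by
                rw [Finset.mem_Ico] at hi; exact hsame i (by omega)
            have e2 : ∑ i ∈ Finset.Icc k t, σ' i = S + T := by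
              rw [splitIcc σ' k (m + 1) t (by omega) (by omega),
                Finset.Ico_add_one_right_eq_Icc, hconst k m le_rfl le_rfl (by omega), hTsame,
                hSA]
              ring
            rw [e1, e2, hσkt]
          · push_neg at hℓk
            have hnum' : ∑ i ∈ Finset.Icc ℓ t, σ' i
                = ((m : ℚ) - (ℓ : ℚ) + 1) * A + T := by
              rw [splitIcc σ' ℓ (m + 1) t (by omega) (by omega),
                Finset.Ico_add_one_right_eq_Icc, hconst ℓ m (by omega) le_rfl hℓm, hTsame]
            rw [hnum']
            have hmd1 : m + 1 < d := by omega
            have hdm : (0 : ℚ) < (d : ℚ) - ((m : ℚ) + 1) := by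
              have : ((m : ℚ) + 1) < d := by exact_mod_cast hmd1
              linarith
            have hcast1 : (k : ℚ) < (ℓ : ℚ) := by exact_mod_cast hℓk
            have hcastℓm : (ℓ : ℚ) ≤ (m : ℚ) := by exact_mod_cast hℓm
            by_cases hTA : T ≤ ((d : ℚ) - ((m : ℚ) + 1)) * A
            · -- compare with the term at ℓ = k
              refine hwit k (by omega) _ ?_
              have hdk : (0 : ℚ) < (d : ℚ) - (k : ℚ) := by linarith
              rw [hσkt, hSA, div_le_div_iff₀ hdl hdk]
              have hp : (0:ℚ) ≤ ((ℓ:ℚ) - k) * (((d:ℚ) - ((m:ℚ)+1)) * A - T) :=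
                mul_nonneg (by linarith) (by linarith)
              have key2 : (A * ((m:ℚ) - (k:ℚ) + 1) + T) * ((d:ℚ) - (ℓ:ℚ))
                  - (((m:ℚ) - (ℓ:ℚ) + 1) * A + T) * ((d:ℚ) - (k:ℚ))
                  = ((ℓ:ℚ) - k) * (((d:ℚ) - ((m:ℚ)+1)) * A - T) := by ring
              linarith
            · push_neg at hTA
              refine hwit (m + 1) (by omega) _ ?_
              have hcast : ((m + 1 : ℕ) : ℚ) = (m : ℚ) + 1 := by push_cast; ring
              rw [← hT, hcast, div_le_div_iff₀ hdl hdm]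
              have hp : (0:ℚ) ≤ ((m:ℚ) + 1 - ℓ) * (T - ((d:ℚ) - ((m:ℚ)+1)) * A) :=
                mul_nonneg (by linarith) (by linarith)
              have key : T * ((d:ℚ) - (ℓ:ℚ))
                  - (((m:ℚ) - (ℓ:ℚ) + 1) * A + T) * ((d:ℚ) - ((m:ℚ)+1))
                  = ((m:ℚ) + 1 - ℓ) * (T - ((d:ℚ) - ((m:ℚ)+1)) * A) := by ring
              linarith
  -- the total arrival mass is preserved
  have hsum_eq : ∑ t ∈ Finset.range d, σ' t = ∑ t ∈ Finset.range d, σ t := by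
    rw [Finset.range_eq_Ico,
      ← Finset.sum_Ico_consecutive σ' (Nat.zero_le k) (by omega : k ≤ d),
      ← Finset.sum_Ico_consecutive σ' (by omega : k ≤ m + 1) (by omega : m + 1 ≤ d),
      ← Finset.sum_Ico_consecutive σ (Nat.zero_le k) (by omega : k ≤ d),
      ← Finset.sum_Ico_consecutive σ (by omega : k ≤ m + 1) (by omega : m + 1 ≤ d)]
    have e1 : ∑ i ∈ Finset.Ico 0 k, σ' i = ∑ i ∈ Finset.Ico 0 k, σ i :=
      Finset.sum_congr rfl fun i hi => by
        rw [Finset.mem_Ico] at hi; exact hsame i (by omega)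
    have e2 : ∑ i ∈ Finset.Ico (m + 1) d, σ' i = ∑ i ∈ Finset.Ico (m + 1) d, σ i :=
      Finset.sum_congr rfl fun i hi => by
        rw [Finset.mem_Ico] at hi; exact hsame i (by omega)
    have e3 : ∑ i ∈ Finset.Ico k (m + 1), σ' i = ∑ i ∈ Finset.Ico k (m + 1), σ i := by
      rw [Finset.Ico_add_one_right_eq_Icc, hconst k m le_rfl le_rfl (by omega), ← hS, hSA]
      ring
    rw [e1, e2, e3]
  unfold PhiU
  rw [hsum_eq]
  apply sub_le_sub_right
  apply Finset.sum_le_sum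
  intro t ht
  rw [Finset.mem_range] at ht
  exact mul_le_mul_of_nonneg_left (hdens t ht) hc
end

section
/- For every universal-deadline instance (d,σ) in which σ is non-decreasing (with nonnegative rational values), Φ_8(σ) ≥ 0; that is, 8·Σ_{t=0}^{d−1} ϱ̂_σ(t) ≥ Σ_{t=0}^{d−1} σ(t). -/
/-- midpoint of `[t, d)` (rounded so that it lies in `[t, d)`). -/
def midpt (d t : ℕ) : ℕ := d - (d - t + 1) / 2

lemma density_ge (d : ℕ) (σ : ℕ → ℚ) {ℓ t : ℕ} (h : ℓ ≤ t) :
    (∑ i ∈ Finset.Icc ℓ t, σ i) / ((d : ℚ) - (ℓ : ℚ)) ≤ maxOnlineDensity d σ t := by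
  exact Finset.le_sup' (fun ℓ => (∑ i ∈ Finset.Icc ℓ t, σ i) / ((d : ℚ) - (ℓ : ℚ)))
    (Finset.mem_range.mpr (Nat.lt_succ_of_le h))

lemma density_nonneg (d : ℕ) (σ : ℕ → ℚ) (hσ : ∀ i, 0 ≤ σ i) {t : ℕ} (ht : t < d) :
    0 ≤ maxOnlineDensity d σ t := by
  refine le_trans ?_ (density_ge d σ (le_refl t))
  rw [Finset.Icc_self, Finset.sum_singleton]
  apply div_nonneg (hσ t)
  have : (t : ℚ) < d := by exact_mod_cast ht
  linarith

lemma key_bound (d : ℕ) (σ : ℕ → ℚ) (hσ : ∀ i, 0 ≤ σ i)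
    (hmono : ∀ i j : ℕ, i ≤ j → j < d → σ i ≤ σ j) {t : ℕ} (ht : t < d) :
    σ t ≤ 2 * maxOnlineDensity d σ (midpt d t) := by
  set t' := midpt d t with ht'def
  have h1 : t ≤ t' := by simp only [ht'def, midpt]; omega
  have h2 : t' < d := by simp only [ht'def, midpt]; omega
  have h3 : d - t ≤ 2 * (t' - t + 1) := by simp only [ht'def, midpt]; omega
  have htd : (t : ℚ) < d := by exact_mod_cast ht
  have hD : (0 : ℚ) < (d : ℚ) - t := by linarith
  have hsum : ((t' - t + 1 : ℕ) : ℚ) * σ t ≤ ∑ i ∈ Finset.Icc t t', σ i := by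
    calc ((t' - t + 1 : ℕ) : ℚ) * σ t = ∑ _i ∈ Finset.Icc t t', σ t := by
          rw [Finset.sum_const, Nat.card_Icc, nsmul_eq_mul]
          congr 2
          omega
      _ ≤ ∑ i ∈ Finset.Icc t t', σ i := by
          apply Finset.sum_le_sum
          intro i hi
          rw [Finset.mem_Icc] at hi
          exact hmono t i hi.1 (lt_of_le_of_lt hi.2 h2)
  have hstep : ((t' - t + 1 : ℕ) : ℚ) * σ t / ((d : ℚ) - t) ≤ maxOnlineDensity d σ t' := by
    refine le_trans ?_ (density_ge d σ h1)
    gcongr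
  have hcast : ((d : ℚ) - t) ≤ 2 * ((t' - t + 1 : ℕ) : ℚ) := by
    have h3' := h3
    qify [h1, le_of_lt ht] at h3'
    push_cast [Nat.cast_sub h1]
    linarith
  rw [div_le_iff₀ hD] at hstep
  nlinarith [mul_le_mul_of_nonneg_right hcast (hσ t), hstep, hD,
    density_nonneg d σ hσ h2]

lemma comp_sum_le (d : ℕ) (g : ℕ → ℚ) (hg : ∀ t, t < d → 0 ≤ g t) :
    ∑ t ∈ Finset.range d, g (midpt d t) ≤ 2 * ∑ t ∈ Finset.range d, g t := by
  have hf : ∀ t, t < d → midpt d t < d := by intro t ht; simp only [midpt]; omega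
  have key : ∀ s ⊆ Finset.range d,
      (∀ x ∈ s, ∀ y ∈ s, midpt d x = midpt d y → x = y) →
      ∑ t ∈ s, g (midpt d t) ≤ ∑ t ∈ Finset.range d, g t := by
    intro s hs hinj
    rw [← Finset.sum_image hinj]
    apply Finset.sum_le_sum_of_subset_of_nonneg
    · intro b hb
      obtain ⟨t, ht, rfl⟩ := Finset.mem_image.mp hb
      exact Finset.mem_range.mpr (hf t (Finset.mem_range.mp (hs ht)))
    · intro b hb _
      exact hg b (Finset.mem_range.mp hb)
  have h1 := key ((Finset.range d).filter (fun t => t % 2 = 0))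
    (Finset.filter_subset _ _) (by
      intro x hx y hy hxy
      simp only [Finset.mem_filter, Finset.mem_range] at hx hy
      simp only [midpt] at hxy
      omega)
  have h2 := key ((Finset.range d).filter (fun t => ¬ t % 2 = 0))
    (Finset.filter_subset _ _) (by
      intro x hx y hy hxy
      simp only [Finset.mem_filter, Finset.mem_range] at hx hy
      simp only [midpt] at hxy
      omega)
  rw [← Finset.sum_filter_add_sum_filter_not (Finset.range d) (fun t => t % 2 = 0)]
  linarith

/-- **feasibility of packing-via-density(8).**  For every
universal-deadline instance `(d, σ)` with `σ` non-decreasing and nonnegative,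
`Φ_8(σ) ≥ 0`, i.e. `8·Σ_{t=0}^{d−1} ϱ̂_σ(t) ≥ Σ_{t=0}^{d−1} σ(t)`. -/
theorem potential_eight_nonneg (d : ℕ) (hd : 1 ≤ d) (σ : ℕ → ℚ)
    (hσ : ∀ i, 0 ≤ σ i) (hmono : ∀ i j : ℕ, i ≤ j → j < d → σ i ≤ σ j) :
    ∑ t ∈ Finset.range d, σ t ≤ 8 * ∑ t ∈ Finset.range d, maxOnlineDensity d σ t := by
  have step1 : ∑ t ∈ Finset.range d, σ t
      ≤ ∑ t ∈ Finset.range d, 2 * maxOnlineDensity d σ (midpt d t) := by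
    apply Finset.sum_le_sum
    intro t ht
    exact key_bound d σ hσ hmono (Finset.mem_range.mp ht)
  have step2 : ∑ t ∈ Finset.range d, maxOnlineDensity d σ (midpt d t)
      ≤ 2 * ∑ t ∈ Finset.range d, maxOnlineDensity d σ t :=
    comp_sum_le d _ (fun t ht => density_nonneg d σ hσ ht)
  have step3 : 0 ≤ ∑ t ∈ Finset.range d, maxOnlineDensity d σ t :=
    Finset.sum_nonneg fun t ht => density_nonneg d σ hσ (Finset.mem_range.mp ht)
  rw [← Finset.mul_sum] at step1
  linarith
end

section
/- Let J be any finite set of unit jobs and define m(t) = ⌈(26/5)·ϱ̂(J(t))⌉ for each t ∈ ℕ. Then (a) for all natural numbers 0 ≤ ℓ < r, Σ_{ℓ≤t<r} m(t) ≥ J(ℓ,r), so there exists a feasible schedule of J executing at most m(t) jobs at each time t; and (b) m(t) ≤ ⌈(26/5)·OPT(J)⌉ for every t. Hence the packing-via-density(5.2) algorithm produces a feasible 5.2-competitive schedule for machine-minimizing scheduling of unit jobs. -/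
/-- `OPT(J)`: the minimum number of machines in a feasible schedule of `J`. -/
noncomputable def OPT {ι : Type*} [Fintype ι] (a dl : ι → ℕ) : ℕ :=
  sInf {n : ℕ | ∃ s : ι → ℕ, (∀ j, a j ≤ s j ∧ s j < dl j) ∧
    ∀ u : ℕ, (Finset.univ.filter fun j => s j = u).card ≤ n}

namespace PVD
open Finset
variable {ι : Type*} [Fintype ι] (a dl : ι → ℕ)


lemma rho_bdd (t : ℕ) : BddAbove {x : ℝ | ∃ ℓ r : ℕ, ℓ < r ∧
    x = ((Finset.univ.filter fun j => a j ≤ t ∧ ℓ ≤ a j ∧ dl j ≤ r).card : ℝ) /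
          ((r : ℝ) - (ℓ : ℝ))} := by
  refine ⟨Fintype.card ι, ?_⟩
  rintro x ⟨ℓ, r, hlr, rfl⟩
  have h1 : (ℓ : ℝ) + 1 ≤ (r : ℝ) := by exact_mod_cast hlr
  have h2 : ((Finset.univ.filter fun j => a j ≤ t ∧ ℓ ≤ a j ∧ dl j ≤ r).card : ℝ)
      ≤ Fintype.card ι := by
    exact_mod_cast Finset.card_filter_le _ _
  calc _ ≤ ((Finset.univ.filter fun j => a j ≤ t ∧ ℓ ≤ a j ∧ dl j ≤ r).card : ℝ) :=
        div_le_self (by positivity) (by linarith)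
    _ ≤ _ := h2

lemma rho_ge (t ℓ r : ℕ) (h : ℓ < r) :
    ((Finset.univ.filter fun j => a j ≤ t ∧ ℓ ≤ a j ∧ dl j ≤ r).card : ℝ) /
      ((r : ℝ) - (ℓ : ℝ)) ≤ rhoHatUpTo a dl t :=
  le_csSup (rho_bdd a dl t) ⟨ℓ, r, h, rfl⟩

lemma rho_nonneg (t : ℕ) : 0 ≤ rhoHatUpTo a dl t := by
  refine le_trans ?_ (rho_ge a dl t 0 1 one_pos)
  positivity

/-- the cumulative arrival counts, counted backwards from `r`. -/
def cAux (ℓ r k : ℕ) : ℕ :=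
  (Finset.univ.filter fun j => r ≤ a j + k ∧ ℓ ≤ a j ∧ dl j ≤ r).card

lemma cAux_mono (ℓ r : ℕ) : Monotone (cAux a dl ℓ r) := by
  intro k k' hk
  apply Finset.card_le_card
  intro j hj
  simp only [Finset.mem_filter, Finset.mem_univ, true_and] at *
  omega

lemma density (hjob : ∀ j, a j < dl j) (ℓ r k : ℕ) (hk1 : 1 ≤ k) (hlr : ℓ < r) :
    ((cAux a dl ℓ r (2*k) : ℝ) - cAux a dl ℓ r (k-1)) / (2*k) ≤
      rhoHatUpTo a dl (r - k) := by
  classical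
  set ℓ' := max ℓ (r - 2*k) with hℓ'
  have hlr' : ℓ' < r := max_lt hlr (by omega)
  refine le_trans ?_ (rho_ge a dl (r-k) ℓ' r hlr')
  have hsub : (Finset.univ.filter fun j => r ≤ a j + 2*k ∧ ℓ ≤ a j ∧ dl j ≤ r) ⊆
      (Finset.univ.filter fun j => r ≤ a j + (k-1) ∧ ℓ ≤ a j ∧ dl j ≤ r) ∪
      (Finset.univ.filter fun j => a j ≤ r - k ∧ ℓ' ≤ a j ∧ dl j ≤ r) := by
    intro j hj
    simp only [Finset.mem_filter, Finset.mem_union, Finset.mem_univ, true_and,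
      hℓ', max_le_iff] at *
    omega
  have hcard : cAux a dl ℓ r (2*k) ≤ cAux a dl ℓ r (k-1) +
      (Finset.univ.filter fun j => a j ≤ r - k ∧ ℓ' ≤ a j ∧ dl j ≤ r).card :=
    le_trans (Finset.card_le_card hsub) (Finset.card_union_le _ _)
  have hnum : (cAux a dl ℓ r (2*k) : ℝ) - cAux a dl ℓ r (k-1) ≤
      ((Finset.univ.filter fun j => a j ≤ r - k ∧ ℓ' ≤ a j ∧ dl j ≤ r).card : ℝ) := by
    have h := (Nat.cast_le (α := ℝ)).2 hcard
    push_cast at h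
    linarith
  have hden0 : (0:ℝ) < (r:ℝ) - ℓ' := by
    have : (ℓ' : ℝ) + 1 ≤ r := by exact_mod_cast hlr'
    linarith
  have hden : (r:ℝ) - ℓ' ≤ 2*k := by
    have h1 : r - ℓ' ≤ 2*k := by omega
    have h2 : ((r - ℓ' : ℕ) : ℝ) = (r:ℝ) - ℓ' := by
      have : ℓ' ≤ r := hlr'.le
      push_cast [this]; ring
    rw [← h2]
    exact_mod_cast h1
  exact div_le_div₀ (by positivity) hnum hden0 hden



lemma tele (f : ℕ → ℝ) (p : ℕ) : ∀ q, p ≤ q →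
    ∑ m ∈ Icc (p+1) q, (f m - f (m-1)) = f q - f p := by
  intro q hq
  induction q, hq using Nat.le_induction with
  | base => simp
  | succ q hq ih =>
    rw [← Finset.Ico_add_one_right_eq_Icc, Finset.sum_Ico_succ_top (by omega), Finset.Ico_add_one_right_eq_Icc, ih]
    simp

lemma quarter (c : ℕ → ℕ) (hmono : Monotone c) (h0 : c 0 = 0) (n : ℕ) (hn : 1 ≤ n)
    (hcap : ∀ k, n ≤ k → c k = c n) :
    (c n : ℝ) / 4 ≤ ∑ k ∈ Icc 1 n, ((c (2*k) : ℝ) - c (k-1)) / (2*k) := by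
  set f : ℕ → ℝ := fun m => (c m : ℝ) with hf
  set d : ℕ → ℝ := fun m => f m - f (m-1) with hd
  have hdnn : ∀ m, 0 ≤ d m := by
    intro m
    simp only [hd, hf, sub_nonneg, Nat.cast_le]
    exact hmono (by omega)
  -- rewrite each summand as a double sum
  have step1 : ∀ k ∈ Icc 1 n, ((c (2*k) : ℝ) - c (k-1)) / (2*k) =
      ∑ m ∈ Icc 1 (2*n), (if k ≤ m ∧ m ≤ 2*k then d m / (2*k) else 0) := by
    intro k hk
    rw [mem_Icc] at hk
    rw [← Finset.sum_filter]
    have hfil : (Icc 1 (2*n)).filter (fun m => k ≤ m ∧ m ≤ 2*k) = Icc k (2*k) := by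
      ext m
      simp only [mem_filter, mem_Icc]
      omega
    rw [hfil]
    have h2 : Icc k (2*k) = Icc ((k-1)+1) (2*k) := by congr 1; omega
    rw [h2, ← Finset.sum_div, tele f (k-1) (2*k) (by omega)]
  rw [Finset.sum_congr rfl step1, Finset.sum_comm]
  -- lower bound each inner sum by `d m / 4`
  have step2 : ∀ m ∈ Icc 1 (2*n), d m / 4 ≤
      ∑ k ∈ Icc 1 n, (if k ≤ m ∧ m ≤ 2*k then d m / (2*k) else 0) := by
    intro m hm
    rw [mem_Icc] at hm
    by_cases hmn : m ≤ n
    · rw [← Finset.sum_filter]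
      have hsub : Icc ((m+1)/2) m ⊆ (Icc 1 n).filter (fun k => k ≤ m ∧ m ≤ 2*k) := by
        intro k hk
        rw [mem_Icc] at hk
        simp only [mem_filter, mem_Icc]
        omega
      refine le_trans ?_ (Finset.sum_le_sum_of_subset_of_nonneg hsub ?_)
      · have hterm : ∀ k ∈ Icc ((m+1)/2) m, d m / (2*m) ≤ d m / (2*k) := by
          intro k hk
          rw [mem_Icc] at hk
          apply div_le_div_of_nonneg_left (hdnn m)
            (by exact_mod_cast (by omega : (0:ℕ) < 2*k))
          exact_mod_cast (by omega : 2*k ≤ 2*m)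
        refine le_trans ?_ (Finset.sum_le_sum hterm)
        rw [Finset.sum_const, Nat.card_Icc]
        have hcnt : m + 1 - (m+1)/2 = m/2 + 1 := by omega
        rw [hcnt, nsmul_eq_mul]
        have hm0 : (0:ℝ) < m := by exact_mod_cast hm.1
        have hkey : (1:ℝ)/4 ≤ ((m/2 + 1 : ℕ) : ℝ) / (2*m) := by
          rw [div_le_div_iff₀ (by norm_num) (by positivity)]
          have : (m:ℝ) + 1 ≤ 2 * ((m/2 + 1 : ℕ) : ℝ) := by
            have : m + 1 ≤ 2 * (m/2 + 1) := by omega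
            exact_mod_cast this
          linarith
        calc d m / 4 = d m * (1/4) := by ring
          _ ≤ d m * (((m/2 + 1 : ℕ) : ℝ) / (2*m)) :=
              mul_le_mul_of_nonneg_left hkey (hdnn m)
          _ = ((m/2 + 1 : ℕ) : ℝ) * (d m / (2*m)) := by ring
      · intro k _ _
        exact div_nonneg (hdnn m) (by positivity)
    · have hd0 : d m = 0 := by
        simp only [hd, hf, hcap m (by omega), hcap (m-1) (by omega), sub_self]
      have : ∀ k ∈ Icc 1 n, (if k ≤ m ∧ m ≤ 2*k then d m / (2*k) else 0) = 0 := by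
        intro k _
        split_ifs
        · rw [hd0]; simp
        · rfl
      rw [Finset.sum_congr rfl this]
      rw [hd0]
      simp
  refine le_trans ?_ (Finset.sum_le_sum step2)
  -- computing the total
  have h3 : Icc 1 (2*n) = Icc (0+1) (2*n) := by norm_num
  rw [← Finset.sum_div]
  rw [show ∀ x:ℝ, x/4 = x/4 from fun _ => rfl]
  have := tele f 0 (2*n) (by omega)
  rw [h3, this]
  simp only [hf, h0, hcap (2*n) (by omega)]
  norm_num





lemma cAux_zero (hjob : ∀ j, a j < dl j) (ℓ r : ℕ) : cAux a dl ℓ r 0 = 0 := by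
  rw [cAux, Finset.card_eq_zero, Finset.filter_eq_empty_iff]
  intro j _
  have := hjob j
  omega

lemma cAux_cap (ℓ r : ℕ) (hlr : ℓ < r) : ∀ k, r - ℓ ≤ k → cAux a dl ℓ r k = cAux a dl ℓ r (r - ℓ) := by
  intro k hk
  unfold cAux
  congr 1
  ext j
  simp only [Finset.mem_filter, Finset.mem_univ, true_and]
  omega

lemma jobCount_eq (ℓ r : ℕ) (hlr : ℓ < r) : jobCount a dl ℓ r = cAux a dl ℓ r (r - ℓ) := by
  unfold jobCount cAux
  congr 1
  ext j
  simp only [Finset.mem_filter, Finset.mem_univ, true_and]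
  omega

lemma partA (hjob : ∀ j, a j < dl j) (ℓ r : ℕ) (hlr : ℓ < r) :
    (jobCount a dl ℓ r : ℤ) ≤ ∑ t ∈ Finset.Ico ℓ r, ⌈(26 / 5 : ℝ) * rhoHatUpTo a dl t⌉ := by
  set n := r - ℓ with hn
  have hq := quarter (cAux a dl ℓ r) (cAux_mono a dl ℓ r) (cAux_zero a dl hjob ℓ r)
    n (by omega) (cAux_cap a dl ℓ r hlr)
  have hsum1 : ∑ k ∈ Icc 1 n, ((cAux a dl ℓ r (2*k) : ℝ) - cAux a dl ℓ r (k-1)) / (2*k) ≤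
      ∑ k ∈ Icc 1 n, rhoHatUpTo a dl (r - k) := by
    refine Finset.sum_le_sum fun k hk => ?_
    rw [mem_Icc] at hk
    exact density a dl hjob ℓ r k hk.1 hlr
  have hre : ∑ k ∈ Icc 1 n, rhoHatUpTo a dl (r - k) = ∑ t ∈ Finset.Ico ℓ r, rhoHatUpTo a dl t := by
    refine Finset.sum_nbij' (fun k => r - k) (fun t => r - t) ?_ ?_ ?_ ?_ ?_
    · intro k hk; rw [mem_Icc] at hk; rw [mem_Ico]; omega
    · intro t ht; rw [mem_Ico] at ht; rw [mem_Icc]; omega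
    · intro k hk; rw [mem_Icc] at hk; omega
    · intro t ht; rw [mem_Ico] at ht; omega
    · intro k hk; rfl
  have hceil : ∑ t ∈ Finset.Ico ℓ r, (26 / 5 : ℝ) * rhoHatUpTo a dl t ≤
      ∑ t ∈ Finset.Ico ℓ r, ((⌈(26 / 5 : ℝ) * rhoHatUpTo a dl t⌉ : ℤ) : ℝ) :=
    Finset.sum_le_sum fun t _ => Int.le_ceil _
  have hC0 : (0:ℝ) ≤ (cAux a dl ℓ r n : ℝ) := by positivity
  have main : ((jobCount a dl ℓ r : ℤ) : ℝ) ≤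
      ∑ t ∈ Finset.Ico ℓ r, ((⌈(26 / 5 : ℝ) * rhoHatUpTo a dl t⌉ : ℤ) : ℝ) := by
    rw [← Finset.mul_sum] at hceil
    calc ((jobCount a dl ℓ r : ℤ) : ℝ) = (cAux a dl ℓ r n : ℝ) := by
          rw [jobCount_eq a dl ℓ r hlr]; push_cast; rfl
      _ ≤ (26/5) * ((cAux a dl ℓ r n : ℝ) / 4) := by linarith
      _ ≤ (26/5) * ∑ k ∈ Icc 1 n, ((cAux a dl ℓ r (2*k) : ℝ) - cAux a dl ℓ r (k-1)) / (2*k) := by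
          linarith
      _ ≤ (26/5) * ∑ k ∈ Icc 1 n, rhoHatUpTo a dl (r - k) := by linarith
      _ = (26/5) * ∑ t ∈ Finset.Ico ℓ r, rhoHatUpTo a dl t := by rw [hre]
      _ ≤ _ := hceil
  exact_mod_cast main

lemma ceil_nn (t : ℕ) : 0 ≤ ⌈(26 / 5 : ℝ) * rhoHatUpTo a dl t⌉ :=
  Int.ceil_nonneg (mul_nonneg (by norm_num) (rho_nonneg a dl t))

lemma partA_nat (hjob : ∀ j, a j < dl j) (ℓ r : ℕ) (hlr : ℓ < r) :
    jobCount a dl ℓ r ≤ ∑ t ∈ Finset.Ico ℓ r, (⌈(26 / 5 : ℝ) * rhoHatUpTo a dl t⌉).toNat := by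
  have h := partA a dl hjob ℓ r hlr
  have h2 : ∑ t ∈ Finset.Ico ℓ r, ⌈(26 / 5 : ℝ) * rhoHatUpTo a dl t⌉ =
      ((∑ t ∈ Finset.Ico ℓ r, (⌈(26 / 5 : ℝ) * rhoHatUpTo a dl t⌉).toNat : ℕ) : ℤ) := by
    push_cast
    exact Finset.sum_congr rfl fun t _ => (Int.toNat_of_nonneg (ceil_nn a dl t)).symm
  rw [h2] at h
  exact_mod_cast h



/-- Hall-type counting: if every interval's demand is covered by capacities, then
any job set fits in the union of its intervals. -/
lemma hall_count (hjob : ∀ j, a j < dl j) (mnat : ℕ → ℕ)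
    (hcov : ∀ ℓ r : ℕ, ℓ < r → jobCount a dl ℓ r ≤ ∑ t ∈ Finset.Ico ℓ r, mnat t) :
    ∀ T : Finset ℕ, ∀ S : Finset ι, (∀ j ∈ S, Finset.Ico (a j) (dl j) ⊆ T) →
      S.card ≤ ∑ t ∈ T, mnat t := by
  classical
  intro T
  induction T using Finset.strongInduction with
  | _ T ih =>
    intro S hS
    rcases T.eq_empty_or_nonempty with rfl | hT
    · have : S = ∅ := by
        rw [Finset.eq_empty_iff_forall_notMem]
        intro j hj
        exact absurd (hS j hj (Finset.mem_Ico.2 ⟨le_refl _, hjob j⟩)) (Finset.notMem_empty _)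
      simp [this]
    · set r' := T.max' hT + 1 with hr'
      have hex : ∃ ℓ, Finset.Ico ℓ r' ⊆ T := by
        refine ⟨T.max' hT, fun x hx => ?_⟩
        rw [Finset.mem_Ico] at hx
        have : x = T.max' hT := by omega
        rw [this]; exact T.max'_mem hT
      set ℓ' := Nat.find hex with hℓ'
      have hP : Finset.Ico ℓ' r' ⊆ T := Nat.find_spec hex
      have hle : ℓ' ≤ T.max' hT := Nat.find_min' hex (by
        refine fun x hx => ?_
        rw [Finset.mem_Ico] at hx
        have : x = T.max' hT := by omega
        rw [this]; exact T.max'_mem hT)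
      have hlr' : ℓ' < r' := by omega
      have hdl : ∀ j ∈ S, dl j ≤ r' := by
        intro j hj
        have h1 : dl j - 1 ∈ Finset.Ico (a j) (dl j) := by
          rw [Finset.mem_Ico]; have := hjob j; omega
        have h2 := Finset.le_max' T _ (hS j hj h1)
        have := hjob j
        omega
      have hS1 : (S.filter fun j => ℓ' ≤ a j).card ≤ ∑ t ∈ Finset.Ico ℓ' r', mnat t := by
        refine le_trans ?_ (hcov ℓ' r' hlr')
        apply Finset.card_le_card
        intro j hj
        rw [Finset.mem_filter] at hj
        simp only [Finset.mem_filter, Finset.mem_univ, true_and]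
        exact ⟨hj.2, hdl j hj.1⟩
      rcases Nat.eq_zero_or_pos ℓ' with h0 | hpos
      · have hSeq : S.filter (fun j => ℓ' ≤ a j) = S :=
          Finset.filter_true_of_mem fun j _ => h0 ▸ Nat.zero_le _
        rw [hSeq] at hS1
        refine le_trans hS1 (Finset.sum_le_sum_of_subset hP)
      · set ℓ'' := ℓ' - 1 with hℓ''
        have hnotT : ℓ'' ∉ T := by
          intro hmem
          have hcontra : Finset.Ico ℓ'' r' ⊆ T := by
            intro x hx
            rw [Finset.mem_Ico] at hx
            rcases Nat.eq_or_lt_of_le hx.1 with heq | hlt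
            · rw [← heq]; exact hmem
            · exact hP (Finset.mem_Ico.2 ⟨by omega, hx.2⟩)
          exact Nat.find_min hex (by omega) hcontra
        set T' := T.filter (fun t => t < ℓ'') with hT'
        have hT'sub : T' ⊂ T := by
          rw [Finset.ssubset_iff_of_subset (Finset.filter_subset _ _)]
          refine ⟨T.max' hT, T.max'_mem hT, ?_⟩
          rw [Finset.mem_filter]
          push_neg
          intro _
          omega
        have hS2 : ∀ j ∈ S.filter (fun j => ¬ ℓ' ≤ a j), Finset.Ico (a j) (dl j) ⊆ T' := by
          intro j hj
          rw [Finset.mem_filter] at hj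
          have haj : a j ≤ ℓ'' := by omega
          have hdlj : dl j ≤ ℓ'' := by
            by_contra hcon
            exact hnotT (hS j hj.1 (Finset.mem_Ico.2 ⟨haj, by omega⟩))
          intro x hx
          rw [Finset.mem_Ico] at hx
          rw [hT', Finset.mem_filter]
          exact ⟨hS j hj.1 (Finset.mem_Ico.2 hx), by omega⟩
        have hIH := ih T' hT'sub (S.filter (fun j => ¬ ℓ' ≤ a j)) hS2
        have hdisj : Disjoint (Finset.Ico ℓ' r') T' := by
          rw [Finset.disjoint_left]
          intro x hx hx'
          rw [Finset.mem_Ico] at hx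
          rw [hT', Finset.mem_filter] at hx'
          omega
        have hsplit : ∑ t ∈ Finset.Ico ℓ' r', mnat t + ∑ t ∈ T', mnat t ≤ ∑ t ∈ T, mnat t := by
          rw [← Finset.sum_union hdisj]
          refine Finset.sum_le_sum_of_subset ?_
          exact Finset.union_subset hP (Finset.filter_subset _ _)
        have hcards := Finset.card_filter_add_card_filter_not (s := S)
          (p := fun j => ℓ' ≤ a j)
        omega



lemma exists_schedule (hjob : ∀ j, a j < dl j) (mnat : ℕ → ℕ)
    (hcov : ∀ ℓ r : ℕ, ℓ < r → jobCount a dl ℓ r ≤ ∑ t ∈ Finset.Ico ℓ r, mnat t) :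
    ∃ s : ι → ℕ, (∀ j, a j ≤ s j ∧ s j < dl j) ∧
      ∀ t : ℕ, (Finset.univ.filter fun j => s j = t).card ≤ mnat t := by
  classical
  set N : ι → Finset (ℕ × ℕ) :=
    fun j => (Finset.Ico (a j) (dl j)).biUnion (fun t => {t} ×ˢ Finset.range (mnat t)) with hN
  have hall : ∀ S : Finset ι, S.card ≤ (S.biUnion N).card := by
    intro S
    have hb : S.biUnion N =
        (S.biUnion fun j => Finset.Ico (a j) (dl j)).biUnion
          (fun t => {t} ×ˢ Finset.range (mnat t)) := by
      rw [Finset.biUnion_biUnion]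
    have hdisj : ∀ t₁ ∈ (S.biUnion fun j => Finset.Ico (a j) (dl j)),
        ∀ t₂ ∈ (S.biUnion fun j => Finset.Ico (a j) (dl j)), t₁ ≠ t₂ →
        Disjoint ({t₁} ×ˢ Finset.range (mnat t₁)) ({t₂} ×ˢ Finset.range (mnat t₂)) := by
      intro t₁ _ t₂ _ hne
      rw [Finset.disjoint_left]
      rintro ⟨x, y⟩ hx hy
      simp only [Finset.mem_product, Finset.mem_singleton] at hx hy
      exact hne (hx.1 ▸ hy.1 ▸ rfl)
    rw [hb, Finset.card_biUnion hdisj]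
    have hcards : ∀ t, ({t} ×ˢ Finset.range (mnat t)).card = mnat t := by
      intro t
      rw [Finset.card_product, Finset.card_singleton, Finset.card_range, one_mul]
    calc S.card ≤ ∑ t ∈ (S.biUnion fun j => Finset.Ico (a j) (dl j)), mnat t :=
          hall_count a dl hjob mnat hcov _ S
            (fun j hj => Finset.subset_biUnion_of_mem (fun j => Finset.Ico (a j) (dl j)) hj)
      _ = _ := by
          refine (Finset.sum_congr rfl fun t _ => (hcards t).symm)
  obtain ⟨f, hfinj, hfmem⟩ := (Finset.all_card_le_biUnion_card_iff_exists_injective N).1 hall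
  refine ⟨fun j => (f j).1, ?_, ?_⟩
  · intro j
    have := hfmem j
    rw [hN, Finset.mem_biUnion] at this
    obtain ⟨t, ht, hmem⟩ := this
    rw [Finset.mem_Ico] at ht
    simp only [Finset.mem_product, Finset.mem_singleton] at hmem
    dsimp only
    rw [hmem.1]
    exact ht
  · intro t
    have hmap : ∀ j ∈ (Finset.univ.filter fun j => (f j).1 = t),
        f j ∈ {t} ×ˢ Finset.range (mnat t) := by
      intro j hj
      rw [Finset.mem_filter] at hj
      have := hfmem j
      rw [hN, Finset.mem_biUnion] at this
      obtain ⟨t', _, hmem⟩ := this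
      simp only [Finset.mem_product, Finset.mem_singleton] at hmem ⊢
      exact ⟨hj.2, by rw [← hj.2, hmem.1]; exact hmem.2⟩
    calc _ ≤ ({t} ×ˢ Finset.range (mnat t)).card :=
          Finset.card_le_card_of_injOn f hmap (hfinj.injOn)
      _ = mnat t := by rw [Finset.card_product, Finset.card_singleton, Finset.card_range, one_mul]



lemma opt_mem (hjob : ∀ j, a j < dl j) :
    OPT a dl ∈ {n : ℕ | ∃ s : ι → ℕ, (∀ j, a j ≤ s j ∧ s j < dl j) ∧
      ∀ u : ℕ, (Finset.univ.filter fun j => s j = u).card ≤ n} := by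
  apply Nat.sInf_mem
  exact ⟨Fintype.card ι, a, fun j => ⟨le_refl _, hjob j⟩,
    fun u => Finset.card_filter_le _ _⟩

lemma rho_le_opt (hjob : ∀ j, a j < dl j) (t : ℕ) :
    rhoHatUpTo a dl t ≤ (OPT a dl : ℝ) := by
  classical
  obtain ⟨s, hfeas, hcnt⟩ := opt_mem a dl hjob
  refine csSup_le ⟨_, 0, 1, one_pos, rfl⟩ ?_
  rintro x ⟨ℓ, r, hlr, rfl⟩
  have hsub : (Finset.univ.filter fun j => a j ≤ t ∧ ℓ ≤ a j ∧ dl j ≤ r) ⊆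
      (Finset.Ico ℓ r).biUnion (fun u => Finset.univ.filter fun j => s j = u) := by
    intro j hj
    simp only [Finset.mem_filter, Finset.mem_univ, true_and] at hj
    rw [Finset.mem_biUnion]
    refine ⟨s j, ?_, by simp⟩
    rw [Finset.mem_Ico]
    have h1 := (hfeas j).1
    have h2 := (hfeas j).2
    omega
  have hcard : (Finset.univ.filter fun j => a j ≤ t ∧ ℓ ≤ a j ∧ dl j ≤ r).card ≤
      (r - ℓ) * OPT a dl := by
    calc _ ≤ ((Finset.Ico ℓ r).biUnion (fun u => Finset.univ.filter fun j => s j = u)).card :=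
          Finset.card_le_card hsub
      _ ≤ ∑ u ∈ Finset.Ico ℓ r, (Finset.univ.filter fun j => s j = u).card :=
          Finset.card_biUnion_le
      _ ≤ ∑ u ∈ Finset.Ico ℓ r, OPT a dl := Finset.sum_le_sum fun u _ => hcnt u
      _ = (r - ℓ) * OPT a dl := by rw [Finset.sum_const, Nat.card_Ico, smul_eq_mul]
  have hden : (0:ℝ) < (r:ℝ) - ℓ := by
    have : (ℓ:ℝ) + 1 ≤ r := by exact_mod_cast hlr
    linarith
  rw [div_le_iff₀ hden]
  have hcast : ((r - ℓ : ℕ) : ℝ) = (r:ℝ) - ℓ := by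
    have : ℓ ≤ r := hlr.le
    push_cast [this]; ring
  calc ((Finset.univ.filter fun j => a j ≤ t ∧ ℓ ≤ a j ∧ dl j ≤ r).card : ℝ)
      ≤ ((r - ℓ : ℕ) : ℝ) * (OPT a dl : ℝ) := by exact_mod_cast hcard
    _ = (OPT a dl : ℝ) * ((r:ℝ) - ℓ) := by rw [hcast]; ring

lemma partB (hjob : ∀ j, a j < dl j) (t : ℕ) :
    ⌈(26 / 5 : ℝ) * rhoHatUpTo a dl t⌉ ≤ ⌈(26 / 5 : ℝ) * (OPT a dl : ℝ)⌉ :=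
  Int.ceil_le_ceil (mul_le_mul_of_nonneg_left (rho_le_opt a dl hjob t) (by norm_num))


end PVD

/-- **packing-via-density(5.2) is feasible and 5.2-competitive.**
For any finite set `J` of unit jobs, put `m(t) = ⌈(26/5)·ϱ̂(J(t))⌉`.  Then
(a) for all `0 ≤ ℓ < r`, `Σ_{ℓ≤t<r} m(t) ≥ J(ℓ,r)`, and there is a feasible schedule
of `J` starting at most `m(t)` jobs at each time `t`; and (b) `m(t) ≤ ⌈(26/5)·OPT(J)⌉`
for every `t`. -/
theorem packing_via_density_five_point_two {ι : Type*} [Fintype ι]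
    (a dl : ι → ℕ) (hjob : ∀ j, a j < dl j) :
    (∀ ℓ r : ℕ, ℓ < r →
      (jobCount a dl ℓ r : ℤ) ≤ ∑ t ∈ Finset.Ico ℓ r, ⌈(26 / 5 : ℝ) * rhoHatUpTo a dl t⌉) ∧
    (∃ s : ι → ℕ, (∀ j, a j ≤ s j ∧ s j < dl j) ∧
      ∀ t : ℕ, ((Finset.univ.filter fun j => s j = t).card : ℤ) ≤
        ⌈(26 / 5 : ℝ) * rhoHatUpTo a dl t⌉) ∧
    (∀ t : ℕ, ⌈(26 / 5 : ℝ) * rhoHatUpTo a dl t⌉ ≤ ⌈(26 / 5 : ℝ) * (OPT a dl : ℝ)⌉) := by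
  refine ⟨fun ℓ r hlr => PVD.partA a dl hjob ℓ r hlr, ?_, fun t => PVD.partB a dl hjob t⟩
  obtain ⟨s, hfeas, hcnt⟩ := PVD.exists_schedule a dl hjob
    (fun t => (⌈(26 / 5 : ℝ) * rhoHatUpTo a dl t⌉).toNat)
    (fun ℓ r hlr => PVD.partA_nat a dl hjob ℓ r hlr)
  refine ⟨s, hfeas, fun t => ?_⟩
  have h := hcnt t
  have h2 : (((⌈(26 / 5 : ℝ) * rhoHatUpTo a dl t⌉).toNat : ℕ) : ℤ) =
      ⌈(26 / 5 : ℝ) * rhoHatUpTo a dl t⌉ := Int.toNat_of_nonneg (PVD.ceil_nn a dl t)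
  rw [← h2]
  exact_mod_cast h
end

section
/- Let (d,σ) be a universal-deadline instance with σ non-decreasing and taking nonnegative rational values, let α ≥ 2 and i ≥ 1 be integers with α^{i+1} ≤ d, and suppose σ(d−α^i) > 0. Let W = Σ_{d−α^{i+1} ≤ t < d−α^i} σ(t). Then Σ_{d−α^{i+1} ≤ t < d−α^i} ϱ̂_σ(t) ≥ W² / (2·α^{i+1}·σ(d−α^i)). -/
lemma sq_sum_le_two_mul (s : Finset ℕ) (f : ℕ → ℚ) (hf : ∀ j, 0 ≤ f j) :
    (∑ t ∈ s, f t) ^ 2 ≤ 2 * ∑ t ∈ s, (∑ j ∈ s.filter (· ≤ t), f j) * f t := by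
  have hB : ∑ t ∈ s, (∑ j ∈ s.filter (· ≤ t), f j) * f t
      = ∑ t ∈ s, ∑ j ∈ s.filter (· ≤ t), f j * f t := by
    simp [Finset.sum_mul]
  have h1 : (∑ t ∈ s, f t) ^ 2 = ∑ t ∈ s, ∑ j ∈ s, f j * f t := by
    rw [sq, Finset.sum_mul_sum]
    exact Finset.sum_congr rfl fun t _ => Finset.sum_congr rfl fun j _ => mul_comm _ _
  have hsplit : ∀ t ∈ s, ∑ j ∈ s, f j * f t
      = ∑ j ∈ s.filter (· ≤ t), f j * f t + ∑ j ∈ s.filter (fun j => ¬ j ≤ t), f j * f t :=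
    fun t _ => (Finset.sum_filter_add_sum_filter_not s _ _).symm
  have hA : ∑ t ∈ s, ∑ j ∈ s.filter (fun j => ¬ j ≤ t), f j * f t
      ≤ ∑ t ∈ s, ∑ j ∈ s.filter (· ≤ t), f j * f t := by
    have e1 : ∑ t ∈ s, ∑ j ∈ s.filter (fun j => ¬ j ≤ t), f j * f t
        = ∑ j ∈ s, ∑ t ∈ s.filter (fun t => ¬ j ≤ t), f j * f t := by
      simp only [Finset.sum_filter]
      exact Finset.sum_comm
    rw [e1]
    apply Finset.sum_le_sum
    intro j _
    have hsub : s.filter (fun t => ¬ j ≤ t) ⊆ s.filter (fun t => t ≤ j) := by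
      intro t ht
      simp only [Finset.mem_filter] at *
      exact ⟨ht.1, by omega⟩
    calc ∑ t ∈ s.filter (fun t => ¬ j ≤ t), f j * f t
        ≤ ∑ t ∈ s.filter (fun t => t ≤ j), f j * f t :=
          Finset.sum_le_sum_of_subset_of_nonneg hsub (fun t _ _ => mul_nonneg (hf j) (hf t))
      _ = ∑ t ∈ s.filter (· ≤ j), f t * f j :=
          Finset.sum_congr rfl fun t _ => mul_comm _ _
  calc (∑ t ∈ s, f t) ^ 2 = ∑ t ∈ s, ∑ j ∈ s, f j * f t := h1
    _ = (∑ t ∈ s, ∑ j ∈ s.filter (· ≤ t), f j * f t)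
        + ∑ t ∈ s, ∑ j ∈ s.filter (fun j => ¬ j ≤ t), f j * f t := by
        rw [← Finset.sum_add_distrib]; exact Finset.sum_congr rfl hsplit
    _ ≤ (∑ t ∈ s, ∑ j ∈ s.filter (· ≤ t), f j * f t)
        + ∑ t ∈ s, ∑ j ∈ s.filter (· ≤ t), f j * f t := by linarith
    _ = 2 * ∑ t ∈ s, (∑ j ∈ s.filter (· ≤ t), f j) * f t := by rw [hB]; ring

/-- For a non-decreasing universal-deadline instance `(d, σ)`,
integers `α ≥ 2`, `i ≥ 1` with `α^{i+1} ≤ d`, and `σ(d−α^i) > 0`, letting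
`W = Σ_{d−α^{i+1} ≤ t < d−α^i} σ(t)`, the densities generated on the block
`[d−α^{i+1}, d−α^i)` satisfy `Σ ϱ̂_σ(t) ≥ W² / (2·α^{i+1}·σ(d−α^i))`. -/
theorem tail_block_density_lower_bound (d α i : ℕ) (σ : ℕ → ℚ)
    (hσ : ∀ t, 0 ≤ σ t) (hmono : ∀ s t : ℕ, s ≤ t → t < d → σ s ≤ σ t)
    (hα : 2 ≤ α) (hi : 1 ≤ i) (hαd : α ^ (i + 1) ≤ d) (hpos : 0 < σ (d - α ^ i)) :
    (∑ t ∈ Finset.Ico (d - α ^ (i + 1)) (d - α ^ i), σ t) ^ 2 /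
        (2 * (α : ℚ) ^ (i + 1) * σ (d - α ^ i)) ≤
      ∑ t ∈ Finset.Ico (d - α ^ (i + 1)) (d - α ^ i), maxOnlineDensity d σ t := by
  set L := d - α ^ (i + 1) with hL
  set R := d - α ^ i with hR
  have hαi : 2 ≤ α ^ i := le_trans hα (Nat.le_self_pow (by omega) α)
  have hlt : α ^ i < α ^ (i + 1) := Nat.pow_lt_pow_succ (by omega)
  have hRd : R < d := by omega
  have hαQ : (0 : ℚ) < (α : ℚ) := by exact_mod_cast (by omega : 0 < α)
  have hApos : (0 : ℚ) < (α : ℚ) ^ (i + 1) := pow_pos hαQ _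
  have hcast : ((d : ℚ) - (L : ℚ)) = (α : ℚ) ^ (i + 1) := by
    have h := Nat.cast_sub hαd (R := ℚ)
    push_cast at h
    rw [hL, h]; ring
  have hstep : ∀ t ∈ Finset.Ico L R,
      (∑ j ∈ Finset.Icc L t, σ j) / (α : ℚ) ^ (i + 1) ≤ maxOnlineDensity d σ t := by
    intro t ht
    rw [Finset.mem_Ico] at ht
    have hLmem : L ∈ Finset.range (t + 1) := Finset.mem_range.mpr (by omega)
    have h2 := Finset.le_sup'
      (fun ℓ => (∑ i ∈ Finset.Icc ℓ t, σ i) / ((d : ℚ) - (ℓ : ℚ))) hLmem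
    rw [maxOnlineDensity]
    calc (∑ j ∈ Finset.Icc L t, σ j) / (α : ℚ) ^ (i + 1)
        = (∑ j ∈ Finset.Icc L t, σ j) / ((d : ℚ) - (L : ℚ)) := by rw [hcast]
      _ ≤ _ := h2
  have hfilter : ∀ t ∈ Finset.Ico L R,
      (Finset.Ico L R).filter (· ≤ t) = Finset.Icc L t := by
    intro t ht
    rw [Finset.mem_Ico] at ht
    ext j
    simp only [Finset.mem_filter, Finset.mem_Ico, Finset.mem_Icc]
    omega
  have hW2 : (∑ t ∈ Finset.Ico L R, σ t) ^ 2
      ≤ 2 * σ R * ∑ t ∈ Finset.Ico L R, ∑ j ∈ Finset.Icc L t, σ j := by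
    calc (∑ t ∈ Finset.Ico L R, σ t) ^ 2
        ≤ 2 * ∑ t ∈ Finset.Ico L R, (∑ j ∈ (Finset.Ico L R).filter (· ≤ t), σ j) * σ t :=
          sq_sum_le_two_mul _ _ hσ
      _ = 2 * ∑ t ∈ Finset.Ico L R, (∑ j ∈ Finset.Icc L t, σ j) * σ t := by
          congr 1; exact Finset.sum_congr rfl fun t ht => by rw [hfilter t ht]
      _ ≤ 2 * ∑ t ∈ Finset.Ico L R, (∑ j ∈ Finset.Icc L t, σ j) * σ R := by
          apply mul_le_mul_of_nonneg_left _ (by norm_num)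
          apply Finset.sum_le_sum
          intro t ht
          rw [Finset.mem_Ico] at ht
          exact mul_le_mul_of_nonneg_left (hmono t R (by omega) hRd)
            (Finset.sum_nonneg fun j _ => hσ j)
      _ = 2 * σ R * ∑ t ∈ Finset.Ico L R, ∑ j ∈ Finset.Icc L t, σ j := by
          rw [← Finset.sum_mul]; ring
  have hden : (0 : ℚ) < 2 * (α : ℚ) ^ (i + 1) * σ R :=
    mul_pos (mul_pos two_pos hApos) hpos
  rw [div_le_iff₀ hden]
  have hsum : (∑ t ∈ Finset.Ico L R, ∑ j ∈ Finset.Icc L t, σ j) / (α : ℚ) ^ (i + 1)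
      ≤ ∑ t ∈ Finset.Ico L R, maxOnlineDensity d σ t := by
    rw [Finset.sum_div]
    exact Finset.sum_le_sum hstep
  calc (∑ t ∈ Finset.Ico L R, σ t) ^ 2
      ≤ 2 * σ R * ∑ t ∈ Finset.Ico L R, ∑ j ∈ Finset.Icc L t, σ j := hW2
    _ = ((∑ t ∈ Finset.Ico L R, ∑ j ∈ Finset.Icc L t, σ j) / (α : ℚ) ^ (i + 1))
        * (2 * (α : ℚ) ^ (i + 1) * σ R) := by
        field_simp
    _ ≤ (∑ t ∈ Finset.Ico L R, maxOnlineDensity d σ t) * (2 * (α : ℚ) ^ (i + 1) * σ R) :=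
        mul_le_mul_of_nonneg_right hsum (le_of_lt hden)
end

section
/- Let (d,σ) be a universal-deadline instance with σ non-decreasing and taking nonnegative rational values, and let α ≥ 2 and i ≥ 1 be integers with α^i ≤ d. Then Σ_{d−α^i ≤ t < d−α^{i−1}} ϱ̂_σ(t) ≥ (1/2)·(α−1)²·α^{i−2}·σ(d−α^i). -/
lemma gauss_half (N : ℕ) : (N:ℚ)^2 ≤ 2 * ∑ k ∈ Finset.range N, ((k:ℚ)+1) := by
  induction N with
  | zero => simp
  | succ n ih =>
    rw [Finset.sum_range_succ]
    push_cast
    nlinarith [ih]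

/-- For a non-decreasing universal-deadline instance `(d, σ)` and
integers `α ≥ 2`, `i ≥ 1` with `α^i ≤ d`, the densities generated on the block
`[d−α^i, d−α^{i−1})` satisfy `Σ ϱ̂_σ(t) ≥ (1/2)·(α−1)²·α^{i−2}·σ(d−α^i)`. -/
theorem previous_block_density_lower_bound (d α i : ℕ) (σ : ℕ → ℚ)
    (hσ : ∀ t, 0 ≤ σ t) (hmono : ∀ s t : ℕ, s ≤ t → t < d → σ s ≤ σ t)
    (hα : 2 ≤ α) (hi : 1 ≤ i) (hαd : α ^ i ≤ d) :
    (1 / 2 : ℚ) * ((α : ℚ) - 1) ^ 2 * (α : ℚ) ^ ((i : ℤ) - 2) * σ (d - α ^ i) ≤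
      ∑ t ∈ Finset.Ico (d - α ^ i) (d - α ^ (i - 1)), maxOnlineDensity d σ t := by
  set a := α ^ i with ha
  set b := α ^ (i-1) with hb
  have hα0 : 0 < α := by omega
  have hb1 : 1 ≤ b := Nat.one_le_pow _ _ hα0
  have hab : a = α * b := by
    rw [ha, hb, ← pow_succ']
    congr 1
    omega
  have hba : b < a := by
    have : 2 * b ≤ α * b := Nat.mul_le_mul_right _ hα
    omega
  have had : a ≤ d := hαd
  set σ₀ := σ (d - a) with hσ₀def
  have hσ₀ : 0 ≤ σ₀ := hσ _
  have ha0 : 0 < a := by omega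
  have haQ : (0:ℚ) < (a:ℚ) := by exact_mod_cast ha0
  have hαQ : (0:ℚ) < (α:ℚ) := by exact_mod_cast hα0
  have hbQ : (0:ℚ) < (b:ℚ) := by exact_mod_cast hb1
  -- pointwise lower bound
  have key : ∀ t ∈ Finset.Ico (d - a) (d - b),
      ((t + 1 - (d - a) : ℕ) : ℚ) * σ₀ / (a : ℚ) ≤ maxOnlineDensity d σ t := by
    intro t ht
    rw [Finset.mem_Ico] at ht
    have ht1 : d - a ≤ t := ht.1
    have htd : t < d := lt_of_lt_of_le ht.2 (Nat.sub_le d b)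
    have hmem : d - a ∈ Finset.range (t + 1) := Finset.mem_range.mpr (by omega)
    refine le_trans ?_ (Finset.le_sup' (fun ℓ => (∑ j ∈ Finset.Icc ℓ t, σ j) / ((d : ℚ) - (ℓ : ℚ))) hmem)
    have hden : (d : ℚ) - ((d - a : ℕ) : ℚ) = (a : ℚ) := by
      rw [Nat.cast_sub had]; ring
    rw [hden]
    gcongr
    · calc ((t + 1 - (d - a) : ℕ) : ℚ) * σ₀
          = (Finset.Icc (d - a) t).card • σ₀ := by
            rw [Nat.card_Icc, nsmul_eq_mul]
        _ ≤ ∑ j ∈ Finset.Icc (d - a) t, σ j := by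
            apply Finset.card_nsmul_le_sum
            intro j hj
            rw [Finset.mem_Icc] at hj
            exact hmono _ _ hj.1 (lt_of_le_of_lt hj.2 htd)
  have hsum := Finset.sum_le_sum key
  refine le_trans ?_ hsum
  -- compute the lower-bound sum
  have hrw : ∑ t ∈ Finset.Ico (d - a) (d - b), ((t + 1 - (d - a) : ℕ) : ℚ) * σ₀ / (a : ℚ)
      = (∑ k ∈ Finset.range (a - b), ((k : ℚ) + 1)) * (σ₀ / (a : ℚ)) := by
    rw [Finset.sum_Ico_eq_sum_range]
    have hN : d - b - (d - a) = a - b := by omega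
    rw [hN, Finset.sum_mul]
    apply Finset.sum_congr rfl
    intro k _
    have : d - a + k + 1 - (d - a) = k + 1 := by omega
    rw [this]
    push_cast
    ring
  rw [hrw]
  have hgauss := gauss_half (a - b)
  have hNQ : ((a - b : ℕ) : ℚ) = (α : ℚ) * (b : ℚ) - (b : ℚ) := by
    rw [Nat.cast_sub hba.le]
    congr 1
    rw [hab]
    push_cast
    ring
  have hzpow : (α : ℚ) ^ ((i : ℤ) - 2) = (b : ℚ) / (α : ℚ) := by
    have h1 : (i : ℤ) - 2 = ((i - 1 : ℕ) : ℤ) + (-1) := by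
      have : ((i - 1 : ℕ) : ℤ) = (i : ℤ) - 1 := by
        rw [Nat.cast_sub hi]; simp
      omega
    rw [h1, zpow_add₀ (ne_of_gt hαQ), zpow_natCast, zpow_neg_one, hb]
    push_cast
    ring
  rw [hzpow]
  have haQ' : (a : ℚ) = (α : ℚ) * (b : ℚ) := by rw [hab]; push_cast; ring
  calc (1 / 2 : ℚ) * ((α : ℚ) - 1) ^ 2 * ((b : ℚ) / (α : ℚ)) * σ₀
      = (((α : ℚ) * b - b) ^ 2 / 2) * (σ₀ / ((α : ℚ) * b)) := by
        field_simp
    _ ≤ (∑ k ∈ Finset.range (a - b), ((k : ℚ) + 1)) * (σ₀ / (a : ℚ)) := by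
        rw [haQ']
        apply mul_le_mul_of_nonneg_right
        · rw [← hNQ]
          linarith [hgauss]
        · positivity
end
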